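/- arXiv:1707.05906 — 9 statements merged into one kernel-verified Lean document; each statement's English description precedes it below -/
import Mathlib

section
/- Let e ∈ A be a half-axis, u ∈ U := A_{1/2}(e) and z ∈ Z := A_0(e). Then: (1) u³ = δ_{u²}·u; (2) (uz)z = (1/2)·uz²; (3) 4u²(uz) = 2u(u(uz)) + u(u²z) + u³z; (4) 4(uz)² + 2u²z² = u(uz²) + 2(u(uz))z + 2u((uz)z) + (u²z)z; (5) 4(uz)z² = uz³ + (uz²)z + 2((uz)z)z; (6) the Z-part of u(uz) equals (1/2)·u²z, i.e., z_{u(uz)} = (1/2)·u²z. -/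
/-- `A_λ(e)`-based definition of a half-axis in a commutative non-associative `F`-algebra `A`:
`e` is idempotent, `A_1(e) = F e`, `A = F e ⊕ A_{1/2}(e) ⊕ A_0(e)`, and the fusion rules
`Z Z ⊆ Z`, `U U ⊆ F e + Z`, `U Z ⊆ U` hold, where `U = A_{1/2}(e)` and `Z = A_0(e)`. -/
structure IsHalfAxis (F : Type*) [Field F] {A : Type*} [NonUnitalNonAssocCommRing A]
    [Module F A] [SMulCommClass F A A] [IsScalarTower F A A] (e : A) : Prop where
  idem : e * e = e
  eig_one : {y : A | e * y = y} = {y : A | ∃ c : F, y = c • e}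
  decomp : ∀ x : A, ∃ (c : F) (u z : A),
      e * u = (2⁻¹ : F) • u ∧ e * z = 0 ∧ x = c • e + u + z
  indep : ∀ (c : F) (u z : A), e * u = (2⁻¹ : F) • u → e * z = 0 →
      c • e + u + z = 0 → c = 0 ∧ u = 0 ∧ z = 0
  fusionZZ : ∀ z z' : A, e * z = 0 → e * z' = 0 → e * (z * z') = 0
  fusionUU : ∀ u u' : A, e * u = (2⁻¹ : F) • u → e * u' = (2⁻¹ : F) • u' →
      ∃ (c : F) (z : A), e * z = 0 ∧ u * u' = c • e + z
  fusionUZ : ∀ u z : A, e * u = (2⁻¹ : F) • u → e * z = 0 →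
      e * (u * z) = (2⁻¹ : F) • (u * z)

private lemma smul_cancel₀ {F : Type*} [Field F] {A : Type*} [AddCommGroup A] [Module F A]
    {c : F} (hc : c ≠ 0) {x : A} (h : c • x = 0) : x = 0 := by
  have h2 := congrArg (fun y => c⁻¹ • y) h
  simpa [smul_smul, inv_mul_cancel₀ hc] using h2

private lemma extract4 {F : Type*} [Field F] {A : Type*} [AddCommGroup A] [Module F A]
    (h2 : (2 : F) ≠ 0) {t0 : F} (ht0 : t0 ≠ 0) (ht1 : t0 ^ 2 ≠ 1)
    {c0 c1 c2 c3 c4 : A}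
    (H : ∀ t : F, c0 + t • c1 + t ^ 2 • c2 + t ^ 3 • c3 + t ^ 4 • c4 = 0) :
    c0 = 0 ∧ c1 = 0 ∧ c2 = 0 ∧ c3 = 0 ∧ c4 = 0 := by
  have h0 : c0 = 0 := by simpa using H 0
  have hA := H 1; have hB := H (-1); have hC := H t0; have hD := H (-t0)
  have hq : (1 : F) - t0 ^ 2 ≠ 0 := sub_ne_zero.mpr (Ne.symm ht1)
  have e1 : (2 : F) • c2 + (2 : F) • c4 = 0 := by
    linear_combination (norm := module) hA + hB - (2 : F) • h0
  have e2 : (2 * t0 ^ 2 : F) • c2 + (2 * t0 ^ 4 : F) • c4 = 0 := by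
    linear_combination (norm := module) hC + hD - (2 : F) • h0
  have e3 : ((2 * t0 ^ 2) * ((1 : F) - t0 ^ 2)) • c4 = 0 := by
    linear_combination (norm := module) (t0 ^ 2 : F) • e1 - e2
  have h4 : c4 = 0 :=
    smul_cancel₀ (mul_ne_zero (mul_ne_zero h2 (pow_ne_zero 2 ht0)) hq) e3
  have hc2 : c2 = 0 := by
    have h' : (2 : F) • c2 = 0 := by
      linear_combination (norm := module) e1 - (2 : F) • h4
    exact smul_cancel₀ h2 h'
  have o1 : (2 : F) • c1 + (2 : F) • c3 = 0 := by
    linear_combination (norm := module) hA - hB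
  have o2 : (2 * t0 : F) • c1 + (2 * t0 ^ 3 : F) • c3 = 0 := by
    linear_combination (norm := module) hC - hD
  have o3 : ((2 * t0) * ((1 : F) - t0 ^ 2)) • c3 = 0 := by
    linear_combination (norm := module) (t0 : F) • o1 - o2
  have h3 : c3 = 0 :=
    smul_cancel₀ (mul_ne_zero (mul_ne_zero h2 ht0) hq) o3
  have h1 : c1 = 0 := by
    have h' : (2 : F) • c1 = 0 := by
      linear_combination (norm := module) o1 - (2 : F) • h3
    exact smul_cancel₀ h2 h'
  exact ⟨h0, h1, hc2, h3, h4⟩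

private lemma extract5 {F : Type*} [Field F] {A : Type*} [AddCommGroup A] [Module F A]
    (h2 : (2 : F) ≠ 0) {t0 : F} (ht0 : t0 ≠ 0) (ht1 : t0 ^ 2 ≠ 1)
    {c0 c1 c2 c3 c4 c5 : A}
    (H : ∀ t : F,
      c0 + t • c1 + t ^ 2 • c2 + t ^ 3 • c3 + t ^ 4 • c4 + t ^ 5 • c5 = 0) :
    c2 = 0 := by
  have h0 : c0 = 0 := by simpa using H 0
  have hA := H 1; have hB := H (-1); have hC := H t0; have hD := H (-t0)
  have hq : (1 : F) - t0 ^ 2 ≠ 0 := sub_ne_zero.mpr (Ne.symm ht1)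
  have e1 : (2 : F) • c2 + (2 : F) • c4 = 0 := by
    linear_combination (norm := module) hA + hB - (2 : F) • h0
  have e2 : (2 * t0 ^ 2 : F) • c2 + (2 * t0 ^ 4 : F) • c4 = 0 := by
    linear_combination (norm := module) hC + hD - (2 : F) • h0
  have e3 : ((2 * t0 ^ 2) * ((1 : F) - t0 ^ 2)) • c4 = 0 := by
    linear_combination (norm := module) (t0 ^ 2 : F) • e1 - e2
  have h4 : c4 = 0 :=
    smul_cancel₀ (mul_ne_zero (mul_ne_zero h2 (pow_ne_zero 2 ht0)) hq) e3
  have h' : (2 : F) • c2 = 0 := by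
    linear_combination (norm := module) e1 - (2 : F) • h4
  exact smul_cancel₀ h2 h'

set_option maxHeartbeats 2000000 in
theorem stmt2 {F : Type*} [Field F] {A : Type*} [NonUnitalNonAssocCommRing A]
    [Module F A] [SMulCommClass F A A] [IsScalarTower F A A]
    (h2 : (2 : F) ≠ 0) (hF : 3 < Cardinal.mk F)
    (hid1 : ∀ x : A, (x * x) * (x * x) = ((x * x) * x) * x)
    (hid2 : ∀ x : A, ((x * x) * x) * (x * x) = x * (((x * x) * x) * x))
    (e : A) (he : IsHalfAxis F e)
    (u z : A) (hu : e * u = (2⁻¹ : F) • u) (hz : e * z = 0) :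
    (∀ (δ : F) (z' : A), e * z' = 0 → u * u = δ • e + z' → (u * u) * u = δ • u) ∧
    ((u * z) * z = (2⁻¹ : F) • (u * (z * z))) ∧
    ((4 : F) • ((u * u) * (u * z)) =
      (2 : F) • (u * (u * (u * z))) + u * ((u * u) * z) + ((u * u) * u) * z) ∧
    ((4 : F) • ((u * z) * (u * z)) + (2 : F) • ((u * u) * (z * z)) =
      u * (u * (z * z)) + (2 : F) • ((u * (u * z)) * z) +
        (2 : F) • (u * ((u * z) * z)) + ((u * u) * z) * z) ∧
    ((4 : F) • ((u * z) * (z * z)) =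
      u * ((z * z) * z) + (u * (z * z)) * z + (2 : F) • (((u * z) * z) * z)) ∧
    (∀ (c : F) (v w : A), e * v = (2⁻¹ : F) • v → e * w = 0 →
      u * (u * z) = c • e + v + w → w = (2⁻¹ : F) • ((u * u) * z)) := by
  -- a scalar outside {0, 1, -1}
  obtain ⟨t0, ht0mem⟩ : ∃ t0 : F, t0 ∉ ({0, 1, -1} : Set F) := by
    by_contra hcon
    push_neg at hcon
    have hsub : (Set.univ : Set F) ⊆ ({0, 1, -1} : Set F) := fun x _ => hcon x
    have hle : Cardinal.mk F ≤ 3 := by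
      have h1 := Cardinal.mk_le_mk_of_subset hsub
      rw [Cardinal.mk_univ] at h1
      refine h1.trans ?_
      have i1 : Cardinal.mk ({0, 1, -1} : Set F) ≤
          Cardinal.mk ({1, -1} : Set F) + 1 := Cardinal.mk_insert_le
      have i2 : Cardinal.mk ({1, -1} : Set F) ≤
          Cardinal.mk ({-1} : Set F) + 1 := Cardinal.mk_insert_le
      have i3 : Cardinal.mk ({(-1 : F)} : Set F) = 1 := Cardinal.mk_singleton _
      calc Cardinal.mk ({0, 1, -1} : Set F) ≤ Cardinal.mk ({1, -1} : Set F) + 1 := i1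
        _ ≤ (Cardinal.mk ({(-1 : F)} : Set F) + 1) + 1 := by gcongr
        _ = 3 := by rw [i3]; norm_num
    exact absurd hF (not_lt.mpr hle)
  simp only [Set.mem_insert_iff, Set.mem_singleton_iff, not_or] at ht0mem
  obtain ⟨ht0, ht0a, ht0b⟩ := ht0mem
  have ht1 : t0 ^ 2 ≠ 1 := by
    intro h
    have hfac : (t0 - 1) * (t0 + 1) = 0 := by linear_combination h
    rcases mul_eq_zero.mp hfac with h' | h'
    · exact ht0a (by linear_combination h')
    · exact ht0b (by linear_combination h')

  obtain ⟨q0, w0, hzw0, hw0⟩ := he.fusionUU u u hu hu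
  have hE0 : e * (u * u) = q0 • e := by
    rw [hw0, mul_add, mul_smul_comm, he.idem, hzw0, add_zero]
  have hU1 : e * (u * z) = (2⁻¹ : F) • (u * z) := he.fusionUZ u z hu hz
  have hZ2 : e * (z * z) = 0 := he.fusionZZ z z hz hz
  have hr3 : (u * u) * u = (q0 * (2⁻¹:F)) • u + w0 * u := by
    rw [hw0, add_mul, smul_mul_assoc, hu, smul_smul]
  have hU3_w : e * (w0 * u) = (2⁻¹ : F) • (w0 * u) := by
    have h := he.fusionUZ u w0 hu hzw0
    rwa [mul_comm u w0] at h
  have hU3 : e * ((u * u) * u) = (2⁻¹ : F) • ((u * u) * u) := by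
    rw [hr3]
    simp only [mul_add, mul_smul_comm, hu, hU3_w]
    module
  have hr4 : (u * u) * z = w0 * z := by
    rw [hw0, add_mul, smul_mul_assoc, hz, smul_zero, zero_add]
  have hZ4 : e * ((u * u) * z) = 0 := by
    rw [hr4]; exact he.fusionZZ w0 z hzw0 hz
  obtain ⟨q5, w5, hzw5, hw5⟩ := he.fusionUU (u * z) u hU1 hu
  have hE5 : e * ((u * z) * u) = q5 • e := by
    rw [hw5, mul_add, mul_smul_comm, he.idem, hzw5, add_zero]
  have hU6 : e * ((u * z) * z) = (2⁻¹ : F) • ((u * z) * z) := he.fusionUZ (u * z) z hU1 hz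
  have hU7 : e * ((z * z) * u) = (2⁻¹ : F) • ((z * z) * u) := by
    have h := he.fusionUZ u (z * z) hu hZ2
    rwa [mul_comm u (z * z)] at h
  have hZ8 : e * ((z * z) * z) = 0 := he.fusionZZ (z * z) z hZ2 hz
  obtain ⟨q9, w9, hzw9, hw9⟩ := he.fusionUU ((u * u) * u) u hU3 hu
  have hE9 : e * (((u * u) * u) * u) = q9 • e := by
    rw [hw9, mul_add, mul_smul_comm, he.idem, hzw9, add_zero]
  have hU10 : e * (((u * u) * u) * z) = (2⁻¹ : F) • (((u * u) * u) * z) := he.fusionUZ ((u * u) * u) z hU3 hz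
  have hU11 : e * (((u * u) * z) * u) = (2⁻¹ : F) • (((u * u) * z) * u) := by
    have h := he.fusionUZ u ((u * u) * z) hu hZ4
    rwa [mul_comm u ((u * u) * z)] at h
  have hZ12 : e * (((u * u) * z) * z) = 0 := he.fusionZZ ((u * u) * z) z hZ4 hz
  have hr13 : ((u * z) * u) * u = (q5 * (2⁻¹:F)) • u + w5 * u := by
    rw [hw5, add_mul, smul_mul_assoc, hu, smul_smul]
  have hU13_w : e * (w5 * u) = (2⁻¹ : F) • (w5 * u) := by
    have h := he.fusionUZ u w5 hu hzw5
    rwa [mul_comm u w5] at h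
  have hU13 : e * (((u * z) * u) * u) = (2⁻¹ : F) • (((u * z) * u) * u) := by
    rw [hr13]
    simp only [mul_add, mul_smul_comm, hu, hU13_w]
    module
  have hr14 : ((u * z) * u) * z = w5 * z := by
    rw [hw5, add_mul, smul_mul_assoc, hz, smul_zero, zero_add]
  have hZ14 : e * (((u * z) * u) * z) = 0 := by
    rw [hr14]; exact he.fusionZZ w5 z hzw5 hz
  obtain ⟨q15, w15, hzw15, hw15⟩ := he.fusionUU ((u * z) * z) u hU6 hu
  have hE15 : e * (((u * z) * z) * u) = q15 • e := by
    rw [hw15, mul_add, mul_smul_comm, he.idem, hzw15, add_zero]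
  have hU16 : e * (((u * z) * z) * z) = (2⁻¹ : F) • (((u * z) * z) * z) := he.fusionUZ ((u * z) * z) z hU6 hz
  obtain ⟨q17, w17, hzw17, hw17⟩ := he.fusionUU ((z * z) * u) u hU7 hu
  have hE17 : e * (((z * z) * u) * u) = q17 • e := by
    rw [hw17, mul_add, mul_smul_comm, he.idem, hzw17, add_zero]
  have hU18 : e * (((z * z) * u) * z) = (2⁻¹ : F) • (((z * z) * u) * z) := he.fusionUZ ((z * z) * u) z hU7 hz
  have hU19 : e * (((z * z) * z) * u) = (2⁻¹ : F) • (((z * z) * z) * u) := by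
    have h := he.fusionUZ u ((z * z) * z) hu hZ8
    rwa [mul_comm u ((z * z) * z)] at h
  have hZ20 : e * (((z * z) * z) * z) = 0 := he.fusionZZ ((z * z) * z) z hZ8 hz
  have E2 : ∀ s t : F, (e + s • u + t • z) * (e + s • u + t • z) =
      ((1 : F) * s ^ 2) • (u * u) + ((2 : F) * s * t) • (u * z) + ((1 : F) * t ^ 2) • (z * z) + ((1 : F)) • e + ((2 : F) * (2⁻¹ : F) * s) • u := by
    intro s t
    simp only [mul_add, add_mul, smul_mul_assoc, mul_smul_comm, smul_smul, smul_zero, mul_zero, zero_mul, add_zero, zero_add,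
      he.idem, hu, hz, mul_comm u e, mul_comm z e, mul_comm z u]
    module
  have E3 : ∀ s t : F, ((e + s • u + t • z) * (e + s • u + t • z)) * (e + s • u + t • z) =
      ((1 : F) * s ^ 3) • ((u * u) * u) + ((1 : F) * s ^ 2 * t) • ((u * u) * z) + ((2 : F) * s ^ 2 * t) • ((u * z) * u) + ((2 : F) * s * t ^ 2) • ((u * z) * z) + ((1 : F) * s * t ^ 2) • ((z * z) * u) + ((1 : F) * t ^ 3) • ((z * z) * z) + ((2 : F) * (2⁻¹ : F) * s ^ 2) • (u * u) + ((4 : F) * (2⁻¹ : F) * s * t) • (u * z) + ((1 : F) + (1 : F) * q0 * s ^ 2) • e + ((2 : F) * (2⁻¹ : F) ^ 2 * s + (1 : F) * (2⁻¹ : F) * s) • u := by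
    intro s t
    rw [E2 s t]
    simp only [mul_add, add_mul, smul_mul_assoc, mul_smul_comm, smul_smul, smul_zero, mul_zero, zero_mul, add_zero, zero_add,
      hE0, hU1, hZ2, he.idem, hu, hz, mul_comm (u * u) e, mul_comm (u * z) e, mul_comm (z * z) e, mul_comm u e]
    module
  have E4 : ∀ s t : F, (((e + s • u + t • z) * (e + s • u + t • z)) * (e + s • u + t • z)) * (e + s • u + t • z) =
      ((1 : F) * s ^ 4) • (((u * u) * u) * u) + ((1 : F) * s ^ 3 * t) • (((u * u) * u) * z) + ((1 : F) * s ^ 3 * t) • (((u * u) * z) * u) + ((1 : F) * s ^ 2 * t ^ 2) • (((u * u) * z) * z) + ((2 : F) * s ^ 3 * t) • (((u * z) * u) * u) + ((2 : F) * s ^ 2 * t ^ 2) • (((u * z) * u) * z) + ((2 : F) * s ^ 2 * t ^ 2) • (((u * z) * z) * u) + ((2 : F) * s * t ^ 3) • (((u * z) * z) * z) + ((1 : F) * s ^ 2 * t ^ 2) • (((z * z) * u) * u) + ((1 : F) * s * t ^ 3) • (((z * z) * u) * z) + ((1 : F) * s * t ^ 3) • (((z * z) * z) * u) + ((1 : F)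 * t ^ 4) • (((z * z) * z) * z) + ((3 : F) * (2⁻¹ : F) * s ^ 3) • ((u * u) * u) + ((2 : F) * (2⁻¹ : F) * s ^ 2 * t) • ((u * u) * z) + ((4 : F) * (2⁻¹ : F) * s ^ 2 * t) • ((u * z) * u) + ((6 : F) * (2⁻¹ : F) * s * t ^ 2) • ((u * z) * z) + ((1 : F) * (2⁻¹ : F) * s * t ^ 2) • ((z * z) * u) + ((2 : F) * (2⁻¹ : F) ^ 2 * s ^ 2 + (1 : F) * (2⁻¹ : F) * s ^ 2) • (u * u) + ((6 : F) * (2⁻¹ : F) ^ 2 * s * t + (1 : F) * (2⁻¹ : F) * s * t) • (u * z) + ((1 : F) + (2 : F) * (2⁻¹ : F) * q0 * s ^ 2 + (1 : F) * q0 * s ^ 2 + (2 : F) * q5 * s ^ 2 * t) • e + ((2 : F) * (2⁻¹ : F) ^ 3 * s + (1 : F) * (2⁻¹ : F) ^ 2 * s + (1 : F) * (2⁻¹ : F) * q0 * s ^ 3 + (1 : F) * (2⁻¹ : F) * s) • u := by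
    intro s t
    rw [E3 s t]
    simp only [mul_add, add_mul, smul_mul_assoc, mul_smul_comm, smul_smul, smul_zero, mul_zero, zero_mul, add_zero, zero_add,
      hE0, hE5, hU1, hU3, hU6, hU7, hZ4, hZ8, he.idem, hu, hz, mul_comm ((u * u) * u) e, mul_comm ((u * u) * z) e, mul_comm ((u * z) * u) e, mul_comm ((u * z) * z) e, mul_comm ((z * z) * u) e, mul_comm ((z * z) * z) e, mul_comm (u * u) e, mul_comm (u * z) e, mul_comm u e]
    module
  have EL4 : ∀ s t : F, ((e + s • u + t • z) * (e + s • u + t • z)) * ((e + s • u + t • z) * (e + s • u + t • z)) =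
      ((1 : F) * s ^ 4) • ((u * u) * (u * u)) + ((4 : F) * s ^ 3 * t) • ((u * u) * (u * z)) + ((2 : F) * s ^ 2 * t ^ 2) • ((u * u) * (z * z)) + ((4 : F) * (2⁻¹ : F) * s ^ 3) • ((u * u) * u) + ((4 : F) * s ^ 2 * t ^ 2) • ((u * z) * (u * z)) + ((4 : F) * s * t ^ 3) • ((u * z) * (z * z)) + ((8 : F) * (2⁻¹ : F) * s ^ 2 * t) • ((u * z) * u) + ((1 : F) * t ^ 4) • ((z * z) * (z * z)) + ((4 : F) * (2⁻¹ : F) * s * t ^ 2) • ((z * z) * u) + ((4 : F) * (2⁻¹ : F) ^ 2 * s ^ 2) • (u * u) + ((4 : F) * (2⁻¹ : F) * s * t) • (u * z) + ((1 : F) + (2 : F) * q0 * s ^ 2) • e + ((4 : F) * (2⁻¹ : F) ^ 2 * s) • u := by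
    intro s t
    rw [E2 s t]
    simp only [mul_add, add_mul, smul_mul_assoc, mul_smul_comm, smul_smul, smul_zero, mul_zero, zero_mul, add_zero, zero_add,
      hE0, hU1, hZ2, he.idem, hu, mul_comm (u * u) e, mul_comm (u * z) (u * u), mul_comm (u * z) e, mul_comm (z * z) (u * u), mul_comm (z * z) (u * z), mul_comm (z * z) e, mul_comm u (u * u), mul_comm u (u * z), mul_comm u (z * z), mul_comm u e]
    module
  have EL5 : ∀ s t : F, (((e + s • u + t • z) * (e + s • u + t • z)) * (e + s • u + t • z)) * ((e + s • u + t • z) * (e + s • u + t • z)) =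
      ((1 : F) * s ^ 5) • (((u * u) * u) * (u * u)) + ((2 : F) * s ^ 4 * t) • (((u * u) * u) * (u * z)) + ((1 : F) * s ^ 3 * t ^ 2) • (((u * u) * u) * (z * z)) + ((2 : F) * (2⁻¹ : F) * s ^ 4) • (((u * u) * u) * u) + ((1 : F) * s ^ 4 * t) • (((u * u) * z) * (u * u)) + ((2 : F) * s ^ 3 * t ^ 2) • (((u * u) * z) * (u * z)) + ((1 : F) * s ^ 2 * t ^ 3) • (((u * u) * z) * (z * z)) + ((2 : F) * (2⁻¹ : F) * s ^ 3 * t) • (((u * u) * z) * u) + ((2 : F) * s ^ 4 * t) • (((u * z) * u) * (u * u)) + ((4 : F) * s ^ 3 * t ^ 2) • (((u * z) * u) * (u * z)) + ((2 : F) * s ^ 2 * t ^ 3) • (((u * z) * u) * (z * z)) + ((4 : F) * (2⁻¹ : F) * s ^ 3 * t) • (((u * z) * u) * u) + ((2 : F) * s ^ 3 * t ^ 2) • (((u * z) * z) * (u * u)) + ((4 : F) * s ^ 2 * t ^ 3) • (((u * z) * z) * (u * z)) + ((2 : F) * s * t ^ 4) • (((u * z) * z) * (z * z)) + ((4 : F)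 * (2⁻¹ : F) * s ^ 2 * t ^ 2) • (((u * z) * z) * u) + ((1 : F) * s ^ 3 * t ^ 2) • (((z * z) * u) * (u * u)) + ((2 : F) * s ^ 2 * t ^ 3) • (((z * z) * u) * (u * z)) + ((1 : F) * s * t ^ 4) • (((z * z) * u) * (z * z)) + ((2 : F) * (2⁻¹ : F) * s ^ 2 * t ^ 2) • (((z * z) * u) * u) + ((1 : F) * s ^ 2 * t ^ 3) • (((z * z) * z) * (u * u)) + ((2 : F) * s * t ^ 4) • (((z * z) * z) * (u * z)) + ((1 : F) * t ^ 5) • (((z * z) * z) * (z * z)) + ((2 : F) * (2⁻¹ : F) * s * t ^ 3) • (((z * z) * z) * u) + ((2 : F) * (2⁻¹ : F) * s ^ 4) • ((u * u) * (u * u)) + ((8 : F) * (2⁻¹ : F) * s ^ 3 * t) • ((u * u) * (u * z)) + ((2 : F) * (2⁻¹ : F) * s ^ 2 * t ^ 2) • ((u * u) * (z * z)) + ((6 : F) * (2⁻¹ : F) ^ 2 * s ^ 3 + (2 : F) * (2⁻¹ : F) * s ^ 3) • ((u * u) * u) + ((8 : F) * (2⁻¹ : F) * s ^ 2 * t ^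 2) • ((u * z) * (u * z)) + ((4 : F) * (2⁻¹ : F) * s * t ^ 3) • ((u * z) * (z * z)) + ((12 : F) * (2⁻¹ : F) ^ 2 * s ^ 2 * t + (2 : F) * (2⁻¹ : F) * s ^ 2 * t) • ((u * z) * u) + ((2 : F) * (2⁻¹ : F) * s * t ^ 2) • ((u * z) * z) + ((2 : F) * (2⁻¹ : F) ^ 2 * s * t ^ 2 + (2 : F) * (2⁻¹ : F) * s * t ^ 2) • ((z * z) * u) + ((4 : F) * (2⁻¹ : F) ^ 3 * s ^ 2 + (2 : F) * (2⁻¹ : F) ^ 2 * s ^ 2) • (u * u) + ((4 : F) * (2⁻¹ : F) ^ 2 * s * t + (2 : F) * (2⁻¹ : F) * q0 * s ^ 3 * t + (2 : F) * (2⁻¹ : F) * s * t) • (u * z) + ((1 : F) + (2 : F) * (2⁻¹ : F) * q0 * s ^ 2 + (1 : F) * q0 ^ 2 * s ^ 4 + (2 : F) * q0 * s ^ 2 + (2 : F) * q5 * s ^ 2 * t) • e + ((2 : F) * (2⁻¹ : F) ^ 3 * s + (2 : F) * (2⁻¹ : F) ^ 2 * q0 * s ^ 3 + (3 : F) * (2⁻¹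 : F) ^ 2 * s) • u := by
    intro s t
    rw [E3 s t, E2 s t]
    simp only [mul_add, add_mul, smul_mul_assoc, mul_smul_comm, smul_smul, smul_zero, mul_zero, zero_mul, add_zero, zero_add,
      hE0, hE5, hU1, hU3, hU6, hU7, hZ2, hZ4, hZ8, he.idem, hu, mul_comm ((u * u) * u) e, mul_comm ((u * u) * z) e, mul_comm ((u * z) * u) e, mul_comm ((u * z) * z) e, mul_comm ((z * z) * u) e, mul_comm ((z * z) * z) e, mul_comm (u * u) e, mul_comm (u * z) (u * u), mul_comm (u * z) e, mul_comm u (u * u), mul_comm u (u * z), mul_comm u (z * z), mul_comm u e]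
    module
  have ER5 : ∀ s t : F, (e + s • u + t • z) * ((((e + s • u + t • z) * (e + s • u + t • z)) * (e + s • u + t • z)) * (e + s • u + t • z)) =
      ((1 : F) * s ^ 5) • ((((u * u) * u) * u) * u) + ((1 : F) * s ^ 4 * t) • ((((u * u) * u) * u) * z) + ((1 : F) * s ^ 4 * t) • ((((u * u) * u) * z) * u) + ((1 : F) * s ^ 3 * t ^ 2) • ((((u * u) * u) * z) * z) + ((1 : F) * s ^ 4 * t) • ((((u * u) * z) * u) * u) + ((1 : F) * s ^ 3 * t ^ 2) • ((((u * u) * z) * u) * z) + ((1 : F) * s ^ 3 * t ^ 2) • ((((u * u) * z) * z) * u) + ((1 : F) * s ^ 2 * t ^ 3) • ((((u * u) * z) * z) * z) + ((2 : F) * s ^ 4 * t) • ((((u * z) * u) * u) * u) + ((2 : F) * s ^ 3 * t ^ 2) • ((((u * z) * u) * u) * z) + ((2 : F) * s ^ 3 * t ^ 2) • ((((u * z) * u) * z) * u) + ((2 : F) * s ^ 2 * t ^ 3) • ((((u * z) * u) * z) * z) + ((2 : F) * s ^ 3 * t ^ 2) • ((((u * z) * z) * u) * u) + ((2 : F) *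 s ^ 2 * t ^ 3) • ((((u * z) * z) * u) * z) + ((2 : F) * s ^ 2 * t ^ 3) • ((((u * z) * z) * z) * u) + ((2 : F) * s * t ^ 4) • ((((u * z) * z) * z) * z) + ((1 : F) * s ^ 3 * t ^ 2) • ((((z * z) * u) * u) * u) + ((1 : F) * s ^ 2 * t ^ 3) • ((((z * z) * u) * u) * z) + ((1 : F) * s ^ 2 * t ^ 3) • ((((z * z) * u) * z) * u) + ((1 : F) * s * t ^ 4) • ((((z * z) * u) * z) * z) + ((1 : F) * s ^ 2 * t ^ 3) • ((((z * z) * z) * u) * u) + ((1 : F) * s * t ^ 4) • ((((z * z) * z) * u) * z) + ((1 : F) * s * t ^ 4) • ((((z * z) * z) * z) * u) + ((1 : F) * t ^ 5) • ((((z * z) * z) * z) * z) + ((3 : F) * (2⁻¹ : F) * s ^ 4) • (((u * u) * u) * u) + ((4 : F) * (2⁻¹ : F) * s ^ 3 * t) • (((u * u) * u) * z) + ((3 : F) * (2⁻¹ : F) * s ^ 3 * t) • (((u * u) * z) * u) + ((2 : F) * (2⁻¹ : F) * s ^ 2 * t ^ 2) • (((u * u) * z) * z) + ((6 : F) * (2⁻¹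 : F) * s ^ 3 * t) • (((u * z) * u) * u) + ((4 : F) * (2⁻¹ : F) * s ^ 2 * t ^ 2) • (((u * z) * u) * z) + ((6 : F) * (2⁻¹ : F) * s ^ 2 * t ^ 2) • (((u * z) * z) * u) + ((8 : F) * (2⁻¹ : F) * s * t ^ 3) • (((u * z) * z) * z) + ((1 : F) * (2⁻¹ : F) * s ^ 2 * t ^ 2) • (((z * z) * u) * u) + ((2 : F) * (2⁻¹ : F) * s * t ^ 3) • (((z * z) * u) * z) + ((1 : F) * (2⁻¹ : F) * s * t ^ 3) • (((z * z) * z) * u) + ((5 : F) * (2⁻¹ : F) ^ 2 * s ^ 3 + (1 : F) * (2⁻¹ : F) * s ^ 3) • ((u * u) * u) + ((2 : F) * (2⁻¹ : F) ^ 2 * s ^ 2 * t + (1 : F) * (2⁻¹ : F) * s ^ 2 * t) • ((u * u) * z) + ((6 : F) * (2⁻¹ : F) ^ 2 * s ^ 2 * t + (1 : F) * (2⁻¹ : F) * s ^ 2 * t) • ((u * z) * u) + ((12 : F) * (2⁻¹ : F) ^ 2 * s * t ^ 2 + (1 : F) * (2⁻¹ : F) * s * t ^ 2) • ((u * z) *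 z) + ((1 : F) * (2⁻¹ : F) ^ 2 * s * t ^ 2) • ((z * z) * u) + ((2 : F) * (2⁻¹ : F) ^ 3 * s ^ 2 + (1 : F) * (2⁻¹ : F) ^ 2 * s ^ 2 + (1 : F) * (2⁻¹ : F) * q0 * s ^ 4 + (1 : F) * (2⁻¹ : F) * s ^ 2) • (u * u) + ((8 : F) * (2⁻¹ : F) ^ 3 * s * t + (2 : F) * (2⁻¹ : F) ^ 2 * s * t + (1 : F) * (2⁻¹ : F) * q0 * s ^ 3 * t + (1 : F) * (2⁻¹ : F) * s * t) • (u * z) + ((1 : F) + (2 : F) * (2⁻¹ : F) ^ 2 * q0 * s ^ 2 + (3 : F) * (2⁻¹ : F) * q0 * s ^ 2 + (4 : F) * (2⁻¹ : F) * q5 * s ^ 2 * t + (1 : F) * q0 * s ^ 2 + (2 : F) * q15 * s ^ 2 * t ^ 2 + (1 : F) * q17 * s ^ 2 * t ^ 2 + (2 : F) * q5 * s ^ 2 * t + (1 : F) * q9 * s ^ 4) • e + ((2 : F) * (2⁻¹ : F) ^ 4 * s + (1 : F) * (2⁻¹ : F) ^ 3 * s + (3 : F) * (2⁻¹ : F)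 ^ 2 * q0 * s ^ 3 + (1 : F) * (2⁻¹ : F) ^ 2 * s + (1 : F) * (2⁻¹ : F) * q0 * s ^ 3 + (2 : F) * (2⁻¹ : F) * q5 * s ^ 3 * t + (1 : F) * (2⁻¹ : F) * s) • u := by
    intro s t
    rw [E4 s t]
    simp only [mul_add, add_mul, smul_mul_assoc, mul_smul_comm, smul_smul, smul_zero, mul_zero, zero_mul, add_zero, zero_add,
      hE0, hE15, hE17, hE5, hE9, hU1, hU10, hU11, hU13, hU16, hU18, hU19, hU3, hU6, hU7, hZ12, hZ14, hZ20, hZ4, he.idem, hu, hz, mul_comm u (((u * u) * u) * u), mul_comm u (((u * u) * u) * z), mul_comm u (((u * u) * z) * u), mul_comm u (((u * u) * z) * z), mul_comm u (((u * z) * u) * u), mul_comm u (((u * z) * u) * z), mul_comm u (((u * z) * z) * u), mul_comm u (((u * z) * z) * z), mul_comm u (((z * z) * u) * u), mul_comm u (((z * z) * u) * z), mul_comm u (((z * z) * z) * u), mul_comm u (((z * z) * z) * z), mul_comm u ((u * u) * u), mul_comm u ((u * u) * z), mul_comm u ((u * z) * u), mul_comm u ((u * z) * z), mul_comm u ((z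 * z) * u), mul_comm u (u * u), mul_comm u (u * z), mul_comm u e, mul_comm z (((u * u) * u) * u), mul_comm z (((u * u) * u) * z), mul_comm z (((u * u) * z) * u), mul_comm z (((u * u) * z) * z), mul_comm z (((u * z) * u) * u), mul_comm z (((u * z) * u) * z), mul_comm z (((u * z) * z) * u), mul_comm z (((u * z) * z) * z), mul_comm z (((z * z) * u) * u), mul_comm z (((z * z) * u) * z), mul_comm z (((z * z) * z) * u), mul_comm z (((z * z) * z) * z), mul_comm z ((u * u) * u), mul_comm z ((u * u) * z), mul_comm z ((u * z) * u), mul_comm z ((u * z) * z), mul_comm z ((z * z) * u), mul_comm z (u * u), mul_comm z (u * z), mul_comm z e, mul_comm z u]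
    module
  have HP : ∀ s t : F,
      (((0 : A)) + s • (((-1 : F) * (2⁻¹ : F) + (3 : F) * (2⁻¹ : F) ^ 2 + (-2 : F) * (2⁻¹ : F) ^ 3) • u) + s ^ 2 • (((-1 : F) * (2⁻¹ : F) + (2 : F) * (2⁻¹ : F) ^ 2) • (u * u) + ((-2 : F) * (2⁻¹ : F) * q0 + (1 : F) * q0) • e) + s ^ 3 • (((1 : F) * (2⁻¹ : F)) • ((u * u) * u) + ((-1 : F) * (2⁻¹ : F) * q0) • u) + s ^ 4 • (((-1 : F)) • (((u * u) * u) * u) + ((1 : F)) • ((u * u) * (u * u)))) + t • (((0 : A)) + s • (((3 : F) * (2⁻¹ : F) + (-6 : F) * (2⁻¹ : F) ^ 2) • (u * z)) + s ^ 2 • (((-2 : F) * (2⁻¹ : F)) • ((u * u) * z) + ((4 : F) * (2⁻¹ : F)) • ((u * z) * u) + ((-2 : F) * q5) • e) + s ^ 3 • (((-1 : F)) • (((u * u) * u) * z) + ((-1 : F)) • (((u * u) * z) * u) + ((-2 : F)) • (((u * z) * u) * u) + ((4 : F)) • ((u * u) * (u * z))) + s ^ 4 • ((0 : A))) + t ^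 2 • (((0 : A)) + s • (((-6 : F) * (2⁻¹ : F)) • ((u * z) * z) + ((3 : F) * (2⁻¹ : F)) • ((z * z) * u)) + s ^ 2 • (((-1 : F)) • (((u * u) * z) * z) + ((-2 : F)) • (((u * z) * u) * z) + ((-2 : F)) • (((u * z) * z) * u) + ((-1 : F)) • (((z * z) * u) * u) + ((2 : F)) • ((u * u) * (z * z)) + ((4 : F)) • ((u * z) * (u * z))) + s ^ 3 • ((0 : A)) + s ^ 4 • ((0 : A))) + t ^ 3 • (((0 : A)) + s • (((-2 : F)) • (((u * z) * z) * z) + ((-1 : F)) • (((z * z) * u) * z) + ((-1 : F)) • (((z * z) * z) * u) + ((4 : F)) • ((u * z) * (z * z))) + s ^ 2 • ((0 : A)) + s ^ 3 • ((0 : A)) + s ^ 4 • ((0 : A))) + t ^ 4 • ((((-1 : F)) • (((z * z) * z) * z) + ((1 : F)) • ((z * z) * (z * z))) + s • ((0 : A)) + s ^ 2 • ((0 : A)) + s ^ 3 • ((0 : A)) + s ^ 4 • ((0 : A))) = 0 := by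
    intro s t
    have h := hid1 (e + s • u + t • z)
    rw [EL4 s t, E4 s t] at h
    linear_combination (norm := module) h
  have HQ : ∀ s t : F,
      (((0 : A)) + s • (((-1 : F) * (2⁻¹ : F) + (2 : F) * (2⁻¹ : F) ^ 2 + (1 : F) * (2⁻¹ : F) ^ 3 + (-2 : F) * (2⁻¹ : F) ^ 4) • u) + s ^ 2 • (((-1 : F) * (2⁻¹ : F) + (1 : F) * (2⁻¹ : F) ^ 2 + (2 : F) * (2⁻¹ : F) ^ 3) • (u * u) + ((-2 : F) * (2⁻¹ : F) ^ 2 * q0 + (-1 : F) * (2⁻¹ : F) * q0 + (1 : F) * q0) • e) + s ^ 3 • (((1 : F) * (2⁻¹ : F) + (1 : F) * (2⁻¹ : F) ^ 2) • ((u * u) * u) + ((-1 : F) * (2⁻¹ : F) ^ 2 * q0 + (-1 : F) * (2⁻¹ : F) * q0) • u) + s ^ 4 • (((-1 : F) * (2⁻¹ : F)) • (((u * u) * u) * u) + ((2 : F) * (2⁻¹ : F)) • ((u * u) * (u * u)) + ((-1 : F) * (2⁻¹ : F) * q0) • (u * u) + ((1 : F) * q0 ^ 2 + (-1 : F) * q9)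 • e) + s ^ 5 • (((-1 : F)) • ((((u * u) * u) * u) * u) + ((1 : F)) • (((u * u) * u) * (u * u)))) + t • (((0 : A)) + s • (((1 : F) * (2⁻¹ : F) + (2 : F) * (2⁻¹ : F) ^ 2 + (-8 : F) * (2⁻¹ : F) ^ 3) • (u * z)) + s ^ 2 • (((-1 : F) * (2⁻¹ : F) + (-2 : F) * (2⁻¹ : F) ^ 2) • ((u * u) * z) + ((1 : F) * (2⁻¹ : F) + (6 : F) * (2⁻¹ : F) ^ 2) • ((u * z) * u) + ((-4 : F) * (2⁻¹ : F) * q5) • e) + s ^ 3 • (((-4 : F) * (2⁻¹ : F)) • (((u * u) * u) * z) + ((-1 : F) * (2⁻¹ : F)) • (((u * u) * z) * u) + ((-2 : F) * (2⁻¹ : F)) • (((u * z) * u) * u) + ((8 : F) * (2⁻¹ : F)) • ((u * u) * (u * z)) + ((1 : F) * (2⁻¹ : F) * q0) • (u * z) + ((-2 : F) * (2⁻¹ : F) * q5) • u) + s ^ 4 • (((-1 : F)) • ((((u * u) * u) * u) * z) + ((-1 : F)) • ((((u * u) * u) * z) * u) + ((-1 : F)) • ((((u * u) * z) * u) * u)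 + ((-2 : F)) • ((((u * z) * u) * u) * u) + ((2 : F)) • (((u * u) * u) * (u * z)) + ((1 : F)) • (((u * u) * z) * (u * u)) + ((2 : F)) • (((u * z) * u) * (u * u)))) + t ^ 2 • (((0 : A)) + s • (((1 : F) * (2⁻¹ : F) + (-12 : F) * (2⁻¹ : F) ^ 2) • ((u * z) * z) + ((2 : F) * (2⁻¹ : F) + (1 : F) * (2⁻¹ : F) ^ 2) • ((z * z) * u)) + s ^ 2 • (((-2 : F) * (2⁻¹ : F)) • (((u * u) * z) * z) + ((-4 : F) * (2⁻¹ : F)) • (((u * z) * u) * z) + ((-2 : F) * (2⁻¹ : F)) • (((u * z) * z) * u) + ((1 : F) * (2⁻¹ : F)) • (((z * z) * u) * u) + ((2 : F) * (2⁻¹ : F)) • ((u * u) * (z * z)) + ((8 : F) * (2⁻¹ : F)) • ((u * z) * (u * z)) + ((-2 : F) * q15 + (-1 : F) * q17) • e) + s ^ 3 • (((-1 : F)) • ((((u * u) * u) * z) * z) + ((-1 : F)) • ((((u * u) * z) * u) * z) + ((-1 : F)) • ((((u * u) * z) * z) * u) + ((-2 : F)) • ((((u * z) * u) * u) * z) +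 ((-2 : F)) • ((((u * z) * u) * z) * u) + ((-2 : F)) • ((((u * z) * z) * u) * u) + ((-1 : F)) • ((((z * z) * u) * u) * u) + ((1 : F)) • (((u * u) * u) * (z * z)) + ((2 : F)) • (((u * u) * z) * (u * z)) + ((4 : F)) • (((u * z) * u) * (u * z)) + ((2 : F)) • (((u * z) * z) * (u * u)) + ((1 : F)) • (((z * z) * u) * (u * u))) + s ^ 4 • ((0 : A))) + t ^ 3 • (((0 : A)) + s • (((-8 : F) * (2⁻¹ : F)) • (((u * z) * z) * z) + ((-2 : F) * (2⁻¹ : F)) • (((z * z) * u) * z) + ((1 : F) * (2⁻¹ : F)) • (((z * z) * z) * u) + ((4 : F) * (2⁻¹ : F)) • ((u * z) * (z * z))) + s ^ 2 • (((-1 : F)) • ((((u * u) * z) * z) * z) + ((-2 : F)) • ((((u * z) * u) * z) * z) + ((-2 : F)) • ((((u * z) * z) * u) * z) + ((-2 : F)) • ((((u * z) * z) * z) * u) + ((-1 : F)) • ((((z * z) * u) * u) * z) + ((-1 : F)) • ((((z * z) * u) * z) * u) + ((-1 : F)) • ((((z * z) * z) * u) * u) + ((1 : F)) • (((u * u) *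 z) * (z * z)) + ((2 : F)) • (((u * z) * u) * (z * z)) + ((4 : F)) • (((u * z) * z) * (u * z)) + ((2 : F)) • (((z * z) * u) * (u * z)) + ((1 : F)) • (((z * z) * z) * (u * u))) + s ^ 3 • ((0 : A)) + s ^ 4 • ((0 : A))) + t ^ 4 • (((0 : A)) + s • (((-2 : F)) • ((((u * z) * z) * z) * z) + ((-1 : F)) • ((((z * z) * u) * z) * z) + ((-1 : F)) • ((((z * z) * z) * u) * z) + ((-1 : F)) • ((((z * z) * z) * z) * u) + ((2 : F)) • (((u * z) * z) * (z * z)) + ((1 : F)) • (((z * z) * u) * (z * z)) + ((2 : F)) • (((z * z) * z) * (u * z))) + s ^ 2 • ((0 : A)) + s ^ 3 • ((0 : A)) + s ^ 4 • ((0 : A))) + t ^ 5 • ((((-1 : F)) • ((((z * z) * z) * z) * z) + ((1 : F)) • (((z * z) * z) * (z * z))) + s • ((0 : A)) + s ^ 2 • ((0 : A)) + s ^ 3 • ((0 : A)) + s ^ 4 • ((0 : A))) = 0 := by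
    intro s t
    have h := hid2 (e + s • u + t • z)
    rw [EL5 s t, ER5 s t] at h
    linear_combination (norm := module) h
  -- extract rows in t
  have HP0 : ∀ s : F, ((0 : A)) + s • (((-1 : F) * (2⁻¹ : F) + (3 : F) * (2⁻¹ : F) ^ 2 + (-2 : F) * (2⁻¹ : F) ^ 3) • u) + s ^ 2 • (((-1 : F) * (2⁻¹ : F) + (2 : F) * (2⁻¹ : F) ^ 2) • (u * u) + ((-2 : F) * (2⁻¹ : F) * q0 + (1 : F) * q0) • e) + s ^ 3 • (((1 : F) * (2⁻¹ : F)) • ((u * u) * u) + ((-1 : F) * (2⁻¹ : F) * q0) • u) + s ^ 4 • (((-1 : F)) • (((u * u) * u) * u) + ((1 : F)) • ((u * u) * (u * u))) = 0 := fun s => (extract4 h2 ht0 ht1 (HP s)).1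
  have HP1 : ∀ s : F, ((0 : A)) + s • (((3 : F) * (2⁻¹ : F) + (-6 : F) * (2⁻¹ : F) ^ 2) • (u * z)) + s ^ 2 • (((-2 : F) * (2⁻¹ : F)) • ((u * u) * z) + ((4 : F) * (2⁻¹ : F)) • ((u * z) * u) + ((-2 : F) * q5) • e) + s ^ 3 • (((-1 : F)) • (((u * u) * u) * z) + ((-1 : F)) • (((u * u) * z) * u) + ((-2 : F)) • (((u * z) * u) * u) + ((4 : F)) • ((u * u) * (u * z))) + s ^ 4 • ((0 : A)) = 0 := fun s => (extract4 h2 ht0 ht1 (HP s)).2.1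
  have HP2 : ∀ s : F, ((0 : A)) + s • (((-6 : F) * (2⁻¹ : F)) • ((u * z) * z) + ((3 : F) * (2⁻¹ : F)) • ((z * z) * u)) + s ^ 2 • (((-1 : F)) • (((u * u) * z) * z) + ((-2 : F)) • (((u * z) * u) * z) + ((-2 : F)) • (((u * z) * z) * u) + ((-1 : F)) • (((z * z) * u) * u) + ((2 : F)) • ((u * u) * (z * z)) + ((4 : F)) • ((u * z) * (u * z))) + s ^ 3 • ((0 : A)) + s ^ 4 • ((0 : A)) = 0 := fun s => (extract4 h2 ht0 ht1 (HP s)).2.2.1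
  have HP3 : ∀ s : F, ((0 : A)) + s • (((-2 : F)) • (((u * z) * z) * z) + ((-1 : F)) • (((z * z) * u) * z) + ((-1 : F)) • (((z * z) * z) * u) + ((4 : F)) • ((u * z) * (z * z))) + s ^ 2 • ((0 : A)) + s ^ 3 • ((0 : A)) + s ^ 4 • ((0 : A)) = 0 := fun s => (extract4 h2 ht0 ht1 (HP s)).2.2.2.1
  have HQ2 : ∀ s : F, ((0 : A)) + s • (((1 : F) * (2⁻¹ : F) + (-12 : F) * (2⁻¹ : F) ^ 2) • ((u * z) * z) + ((2 : F) * (2⁻¹ : F) + (1 : F) * (2⁻¹ : F) ^ 2) • ((z * z) * u)) + s ^ 2 • (((-2 : F) * (2⁻¹ : F)) • (((u * u) * z) * z) + ((-4 : F) * (2⁻¹ : F)) • (((u * z) * u) * z) + ((-2 : F) * (2⁻¹ : F)) • (((u * z) * z) * u) + ((1 : F) * (2⁻¹ : F)) • (((z * z) * u) * u) + ((2 : F) * (2⁻¹ : F)) • ((u * u) * (z * z)) + ((8 : F) * (2⁻¹ : F)) • ((u * z) * (u * z)) + ((-2 : F) * q15 + (-1 : F) * q17) • e) + s ^ 3 •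 (((-1 : F)) • ((((u * u) * u) * z) * z) + ((-1 : F)) • ((((u * u) * z) * u) * z) + ((-1 : F)) • ((((u * u) * z) * z) * u) + ((-2 : F)) • ((((u * z) * u) * u) * z) + ((-2 : F)) • ((((u * z) * u) * z) * u) + ((-2 : F)) • ((((u * z) * z) * u) * u) + ((-1 : F)) • ((((z * z) * u) * u) * u) + ((1 : F)) • (((u * u) * u) * (z * z)) + ((2 : F)) • (((u * u) * z) * (u * z)) + ((4 : F)) • (((u * z) * u) * (u * z)) + ((2 : F)) • (((u * z) * z) * (u * u)) + ((1 : F)) • (((z * z) * u) * (u * u))) + s ^ 4 • ((0 : A)) = 0 := fun s => extract5 h2 ht0 ht1 (fun t => HQ s t)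
  -- extract coefficients in s
  have K30 := (extract4 h2 ht0 ht1 HP0).2.2.2.1
  have K21 := (extract4 h2 ht0 ht1 HP1).2.2.1
  have K31 := (extract4 h2 ht0 ht1 HP1).2.2.2.1
  have K12 := (extract4 h2 ht0 ht1 HP2).2.1
  have K22 := (extract4 h2 ht0 ht1 HP2).2.2.1
  have K13 := (extract4 h2 ht0 ht1 HP3).2.1
  have KQ12 := (extract4 h2 ht0 ht1 HQ2).2.1
  -- orientation helpers
  have A31 : u * (u * (u * z)) = ((u * z) * u) * u := by
    rw [mul_comm u (u * z), mul_comm u ((u * z) * u)]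
  have A32 : u * ((u * u) * z) = ((u * u) * z) * u := mul_comm u ((u * u) * z)
  have A41 : u * (u * (z * z)) = ((z * z) * u) * u := by
    rw [mul_comm u (z * z), mul_comm u ((z * z) * u)]
  have A42 : (u * (u * z)) * z = ((u * z) * u) * z := by rw [mul_comm u (u * z)]
  have A43 : u * ((u * z) * z) = ((u * z) * z) * u := mul_comm u ((u * z) * z)
  have A51 : u * ((z * z) * z) = ((z * z) * z) * u := mul_comm u ((z * z) * z)
  have A52 : (u * (z * z)) * z = ((z * z) * u) * z := by rw [mul_comm u (z * z)]
  have A21 : u * (z * z) = (z * z) * u := mul_comm u (z * z)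
  refine ⟨?_, ?_, ?_, ?_, ?_, ?_⟩
  · -- claim 1
    intro d zz0 hzz0 huu0
    have hdiff : (d - q0) • e + (0 : A) + (zz0 - w0) = 0 := by
      have h := huu0.symm.trans hw0
      linear_combination (norm := module) h
    have h0 := he.indep (d - q0) 0 (zz0 - w0)
      (by rw [mul_zero, smul_zero]) (by rw [mul_sub, hzz0, hzw0, sub_zero]) hdiff
    have hd : d = q0 := sub_eq_zero.mp h0.1
    have hK : (2⁻¹ : F) • ((u * u) * u - q0 • u) = 0 := by
      linear_combination (norm := module) K30
    have hK2 : (u * u) * u - q0 • u = 0 := smul_cancel₀ (inv_ne_zero h2) hK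
    rw [hd]
    linear_combination (norm := module) hK2
  · -- claim 2
    linear_combination (norm := (match_scalars <;> field_simp [h2] <;> ring1))
      (-2 : F) • K12 + (2 : F) • KQ12 - (2⁻¹ : F) • A21
  · -- claim 3
    linear_combination (norm := module) K31 - (2 : F) • A31 - A32
  · -- claim 4
    linear_combination (norm := module) K22 - A41 - (2 : F) • A42 - (2 : F) • A43
  · -- claim 5
    linear_combination (norm := module) K13 - A51 - A52
  · -- claim 6
    intro c v w hv hw heq
    have heq' : (u * z) * u = c • e + v + w := by rw [mul_comm (u * z) u]; exact heq
    have hD : (c - q5) • e + v + (w - (2⁻¹ : F) • ((u * u) * z)) = 0 := by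
      linear_combination (norm := (match_scalars <;> field_simp [h2] <;> ring1))
        (2⁻¹ : F) • K21 - heq'
    have h0 := he.indep (c - q5) v (w - (2⁻¹ : F) • ((u * u) * z)) hv
      (by rw [mul_sub, hw, mul_smul_comm, hZ4, smul_zero, sub_zero]) hD
    exact sub_eq_zero.mp h0.2.2
end

section
/- Assume 𝔽 has more than 3 elements and the identity x²x² = x³x holds for all x ∈ A. Then for all x, y, w ∈ A: (1) 4x²(xy) = x³y + x(x²y) + 2x(x(xy)); and (2) 8(xy)(xw) + 4x²(yw) = (x²y)w + (x²w)y + 2(x(xy))w + 2(x(xw))y + 2x((xy)w) + 2x((xw)y) + 2x(x(yw)). -/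
/-!
Substitute `x + t y` into `x²x² = x³x`: both sides are polynomials of degree four in `t`, and
after cancelling the `t⁰` and `t⁴` terms the identity reads `t P₁ + t² P₂ + t³ P₃ = 0` for all
`t ∈ 𝔽`. Evaluating at `t = 1, -1, c` with `c ∉ {0, 1, -1}` (which exists since `|𝔽| > 3`) and
using `2 ≠ 0` gives `P₁ = P₂ = 0`. Now `P₁ = 0` is identity (1), and `P₂ = 0` is identity (2)
for `w = y`, from which (2) follows by polarizing `y ↦ y + w`.
-/

theorem Field.exists_ne_zero_ne_one_ne_neg_one_of_three_lt_mk {F : Type*} [Field F]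
    (hF : 3 < Cardinal.mk F) : ∃ c : F, c ≠ 0 ∧ c ≠ 1 ∧ c ≠ -1 := by
  classical
  by_contra! hc
  have hsub : (Set.univ : Set F) ⊆ ({0, 1, -1} : Finset F) := fun c _ => by
    by_cases h0 : c = 0
    · simp [h0]
    by_cases h1 : c = 1
    · simp [h1]
    simp [hc c h0 h1]
  have hle : Cardinal.mk F ≤ 3 := by
    calc Cardinal.mk F = Cardinal.mk (Set.univ : Set F) := Cardinal.mk_univ.symm
      _ ≤ (({0, 1, -1} : Finset F).card : Cardinal) := by
          rw [← Cardinal.mk_coe_finset]; exact Cardinal.mk_le_mk_of_subset hsub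
      _ ≤ 3 := by exact_mod_cast Finset.card_le_three
  exact hF.not_ge hle

theorem eq_zero_of_forall_smul_add_sq_smul_add_cube_smul_eq_zero {F M : Type*} [Field F]
    [AddCommGroup M] [Module F M] (h2 : (2 : F) ≠ 0) {c : F} (hc0 : c ≠ 0) (hc1 : c ≠ 1)
    (hcm : c ≠ -1) {a b d : M} (h : ∀ t : F, t • a + t ^ 2 • b + t ^ 3 • d = 0) :
    a = 0 ∧ b = 0 := by
  have hb : b = 0 := by
    have h2b : (2 : F) • b = 0 := by linear_combination (norm := module) h 1 + h (-1)
    exact (smul_eq_zero.mp h2b).resolve_left h2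
  have hc : c * (1 - c) * (1 + c) ≠ 0 :=
    mul_ne_zero (mul_ne_zero hc0 (sub_ne_zero.mpr hc1.symm))
      fun h => hcm (by linear_combination h)
  have hca : (c * (1 - c) * (1 + c)) • a = 0 := by
    linear_combination (norm := module) h c - c ^ 3 • h 1 - (c ^ 2 - c ^ 3) • hb
  exact ⟨(smul_eq_zero.mp hca).resolve_left hc, hb⟩

section

variable {F A : Type*} [Field F] [NonUnitalNonAssocCommRing A] [Module F A]
  [SMulCommClass F A A]

theorem smul_add_sq_smul_add_cube_smul_eq_zero_of_sq_mul_sq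
    (hA : ∀ x : A, (x * x) * (x * x) = ((x * x) * x) * x) (x y : A) (t : F) :
    t • ((4 : F) • ((x * x) * (x * y)) - ((x * x) * x) * y - x * ((x * x) * y)
        - (2 : F) • (x * (x * (x * y)))) +
      t ^ 2 • ((4 : F) • ((x * y) * (x * y)) + (2 : F) • ((x * x) * (y * y))
        - ((x * x) * y) * y - (2 : F) • ((x * (x * y)) * y)
        - (2 : F) • (x * ((x * y) * y)) - x * (x * (y * y))) +
      t ^ 3 • ((4 : F) • ((x * y) * (y * y)) - (2 : F) • (y * (y * (x * y)))
        - y * (x * (y * y)) - x * (y * (y * y))) = 0 := by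
  have hxy := hA (x + t • y)
  have hx := hA x
  have hy := hA y
  simp only [mul_add, mul_smul_comm, smul_smul, mul_comm] at hxy hx hy ⊢
  linear_combination (norm := module) hxy - hx - (t * t * (t * t)) • hy

theorem linearizations_of_sq_mul_sq (h2 : (2 : F) ≠ 0) (hF : 3 < Cardinal.mk F)
    (hA : ∀ x : A, (x * x) * (x * x) = ((x * x) * x) * x) (x y : A) :
    (4 : F) • ((x * x) * (x * y)) =
        ((x * x) * x) * y + x * ((x * x) * y) + (2 : F) • (x * (x * (x * y))) ∧
      (4 : F) • ((x * y) * (x * y)) + (2 : F) • ((x * x) * (y * y)) =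
        ((x * x) * y) * y + (2 : F) • ((x * (x * y)) * y) + (2 : F) • (x * ((x * y) * y)) +
          x * (x * (y * y)) := by
  obtain ⟨c, hc0, hc1, hcm⟩ := Field.exists_ne_zero_ne_one_ne_neg_one_of_three_lt_mk hF
  obtain ⟨hP₁, hP₂⟩ := eq_zero_of_forall_smul_add_sq_smul_add_cube_smul_eq_zero h2 hc0 hc1 hcm
    (smul_add_sq_smul_add_cube_smul_eq_zero_of_sq_mul_sq (F := F) hA x y)
  exact ⟨by linear_combination (norm := module) hP₁, by linear_combination (norm := module) hP₂⟩

end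

theorem stmt3_general {F : Type*} [Field F] {A : Type*} [NonUnitalNonAssocCommRing A]
    [Module F A] [SMulCommClass F A A]
    (h2 : (2 : F) ≠ 0) (hF : 3 < Cardinal.mk F)
    (hid1 : ∀ x : A, (x * x) * (x * x) = ((x * x) * x) * x) :
    ∀ x y w : A,
      ((4 : F) • ((x * x) * (x * y)) =
        ((x * x) * x) * y + x * ((x * x) * y) + (2 : F) • (x * (x * (x * y)))) ∧
      ((8 : F) • ((x * y) * (x * w)) + (4 : F) • ((x * x) * (y * w)) =
        ((x * x) * y) * w + ((x * x) * w) * y + (2 : F) • ((x * (x * y)) * w) +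
          (2 : F) • ((x * (x * w)) * y) + (2 : F) • (x * ((x * y) * w)) +
          (2 : F) • (x * ((x * w) * y)) + (2 : F) • (x * (x * (y * w)))) := by
  intro x y w
  refine ⟨(linearizations_of_sq_mul_sq h2 hF hid1 x y).1, ?_⟩
  have hyw := (linearizations_of_sq_mul_sq h2 hF hid1 x (y + w)).2
  have hy := (linearizations_of_sq_mul_sq h2 hF hid1 x y).2
  have hw := (linearizations_of_sq_mul_sq h2 hF hid1 x w).2
  simp only [mul_add, add_mul, smul_add, mul_comm] at hyw hy hw ⊢
  linear_combination (norm := module) hyw - hy - hw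

theorem stmt3 {F : Type*} [Field F] {A : Type*} [NonUnitalNonAssocCommRing A]
    [Module F A] [SMulCommClass F A A] [IsScalarTower F A A]
    (h2 : (2 : F) ≠ 0) (hF : 3 < Cardinal.mk F)
    (hid1 : ∀ x : A, (x * x) * (x * x) = ((x * x) * x) * x) :
    ∀ x y w : A,
      ((4 : F) • ((x * x) * (x * y)) =
        ((x * x) * x) * y + x * ((x * x) * y) + (2 : F) • (x * (x * (x * y)))) ∧
      ((8 : F) • ((x * y) * (x * w)) + (4 : F) • ((x * x) * (y * w)) =
        ((x * x) * y) * w + ((x * x) * w) * y + (2 : F) • ((x * (x * y)) * w) +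
          (2 : F) • ((x * (x * w)) * y) + (2 : F) • (x * ((x * y) * w)) +
          (2 : F) • (x * ((x * w) * y)) + (2 : F) • (x * (x * (y * w)))) :=
  stmt3_general h2 hF hid1
end

section
/- Assume 𝔽 has more than 3 elements and the identity (xx²)x² = x(x²x²) holds for all x ∈ A. Let e ∈ A be a half-axis. Then (uz)z = (1/2)·uz² for all u ∈ A_{1/2}(e) and z ∈ A_0(e). -/
lemma exists_omega {F : Type*} [Field F] (hF : 3 < Cardinal.mk F) :
    ∃ ω : F, ω ≠ 0 ∧ ω ≠ 1 ∧ ω ≠ -1 := by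
  by_contra hc
  push_neg at hc
  have hsub : (Set.univ : Set F) ⊆ {0, 1, -1} := by
    intro x _
    by_cases h0 : x = 0
    · simp [h0]
    by_cases h1 : x = 1
    · simp [h1]
    · simp [hc x h0 h1]
  have hle : Cardinal.mk F ≤ Cardinal.mk ({0, 1, -1} : Set F) := by
    rw [← Cardinal.mk_univ (α := F)]
    exact Cardinal.mk_le_mk_of_subset hsub
  have h3 : Cardinal.mk ({0, 1, -1} : Set F) ≤ 3 := by
    calc Cardinal.mk ({0, 1, -1} : Set F) ≤ Cardinal.mk ({1, -1} : Set F) + 1 :=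
          Cardinal.mk_insert_le
      _ ≤ (Cardinal.mk ({-1} : Set F) + 1) + 1 := by gcongr; exact Cardinal.mk_insert_le
      _ = 3 := by rw [Cardinal.mk_singleton]; norm_num
  exact absurd hF (not_lt.mpr (hle.trans h3))

set_option maxHeartbeats 4000000 in
theorem stmt4 {F : Type*} [Field F] {A : Type*} [NonUnitalNonAssocCommRing A]
    [Module F A] [SMulCommClass F A A] [IsScalarTower F A A]
    (h2 : (2 : F) ≠ 0) (hF : 3 < Cardinal.mk F)
    (hid : ∀ x : A, (x * (x * x)) * (x * x) = x * ((x * x) * (x * x)))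
    (e : A) (he : IsHalfAxis F e) :
    ∀ u z : A, e * u = (2⁻¹ : F) • u → e * z = 0 →
      (u * z) * z = (2⁻¹ : F) • (u * (z * z)) := by
  intro u z hu hz
  obtain ⟨ω, hω0, hω1, hωm1⟩ : ∃ ω : F, ω ≠ 0 ∧ ω ≠ 1 ∧ ω ≠ -1 := exists_omega hF
  have h4 : (4 : F) ≠ 0 := by
    intro h; apply h2
    have h22 : (2:F)*2 = 0 := by rw [← h]; ring
    rcases mul_eq_zero.mp h22 with h'|h' <;> exact h'
  have hR1 : u * e = (2⁻¹ : F) • u := by rw [mul_comm]; exact hu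
  have hR2 : z * e = 0 := by rw [mul_comm]; exact hz
  obtain ⟨c1, a1, hZw1, hw1⟩ := he.fusionUU u u hu hu
  have hR3 : a1 * e = 0 := by rw [mul_comm]; exact hZw1
  have hE4 : e * (u * z) = (2⁻¹ : F) • (u * z) := he.fusionUZ u z hu hz
  have hR5 : (u * z) * e = (2⁻¹ : F) • (u * z) := by rw [mul_comm]; exact hE4
  have hC6 : z * u = u * z := mul_comm _ _
  have hE7 : e * (z * z) = 0 := he.fusionZZ z z hz hz
  have hR8 : (z * z) * e = 0 := by rw [mul_comm]; exact hE7
  have hE9 : e * (u * a1) = (2⁻¹ : F) • (u * a1) := he.fusionUZ u a1 hu hZw1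
  have hR10 : (u * a1) * e = (2⁻¹ : F) • (u * a1) := by rw [mul_comm]; exact hE9
  obtain ⟨c2, a2, hZw2, hw2⟩ := he.fusionUU u (u * z) hu hE4
  have hR11 : a2 * e = 0 := by rw [mul_comm]; exact hZw2
  have hRw12 : (u * z) * u = c2 • e + a2 := by rw [mul_comm]; exact hw2
  have hE13 : e * (u * (z * z)) = (2⁻¹ : F) • (u * (z * z)) := he.fusionUZ u (z * z) hu hE7
  have hR14 : (u * (z * z)) * e = (2⁻¹ : F) • (u * (z * z)) := by rw [mul_comm]; exact hE13
  have hE15 : e * (z * a1) = 0 := he.fusionZZ z a1 hz hZw1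
  have hR16 : (z * a1) * e = 0 := by rw [mul_comm]; exact hE15
  have hE17 : e * ((u * z) * z) = (2⁻¹ : F) • ((u * z) * z) := he.fusionUZ (u * z) z hE4 hz
  have hR18 : ((u * z) * z) * e = (2⁻¹ : F) • ((u * z) * z) := by rw [mul_comm]; exact hE17
  have hC19 : z * (u * z) = (u * z) * z := mul_comm _ _
  have hE20 : e * (z * (z * z)) = 0 := he.fusionZZ z (z * z) hz hE7
  have hR21 : (z * (z * z)) * e = 0 := by rw [mul_comm]; exact hE20
  have hC22 : a1 * u = u * a1 := mul_comm _ _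
  have hE23 : e * (a1 * a1) = 0 := he.fusionZZ a1 a1 hZw1 hZw1
  have hR24 : (a1 * a1) * e = 0 := by rw [mul_comm]; exact hE23
  have hE25 : e * ((u * z) * a1) = (2⁻¹ : F) • ((u * z) * a1) := he.fusionUZ (u * z) a1 hE4 hZw1
  have hR26 : ((u * z) * a1) * e = (2⁻¹ : F) • ((u * z) * a1) := by rw [mul_comm]; exact hE25
  have hC27 : a1 * (u * z) = (u * z) * a1 := mul_comm _ _
  have hE28 : e * (a1 * (z * z)) = 0 := he.fusionZZ a1 (z * z) hZw1 hE7
  have hR29 : (a1 * (z * z)) * e = 0 := by rw [mul_comm]; exact hE28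
  obtain ⟨c3, a3, hZw3, hw3⟩ := he.fusionUU (u * z) (u * z) hE4 hE4
  have hR30 : a3 * e = 0 := by rw [mul_comm]; exact hZw3
  have hE31 : e * ((u * z) * (z * z)) = (2⁻¹ : F) • ((u * z) * (z * z)) := he.fusionUZ (u * z) (z * z) hE4 hE7
  have hR32 : ((u * z) * (z * z)) * e = (2⁻¹ : F) • ((u * z) * (z * z)) := by rw [mul_comm]; exact hE31
  have hC33 : (z * z) * u = u * (z * z) := mul_comm _ _
  have hC34 : (z * z) * a1 = a1 * (z * z) := mul_comm _ _
  have hC35 : (z * z) * (u * z) = (u * z) * (z * z) := mul_comm _ _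
  have hE36 : e * ((z * z) * (z * z)) = 0 := he.fusionZZ (z * z) (z * z) hE7 hE7
  have hR37 : ((z * z) * (z * z)) * e = 0 := by rw [mul_comm]; exact hE36
  obtain ⟨c4, a4, hZw4, hw4⟩ := he.fusionUU u (u * a1) hu hE9
  have hR38 : a4 * e = 0 := by rw [mul_comm]; exact hZw4
  have hRw39 : (u * a1) * u = c4 • e + a4 := by rw [mul_comm]; exact hw4
  have hE40 : e * ((u * a1) * a1) = (2⁻¹ : F) • ((u * a1) * a1) := he.fusionUZ (u * a1) a1 hE9 hZw1
  have hR41 : ((u * a1) * a1) * e = (2⁻¹ : F) • ((u * a1) * a1) := by rw [mul_comm]; exact hE40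
  obtain ⟨c5, a5, hZw5, hw5⟩ := he.fusionUU (u * z) (u * a1) hE4 hE9
  have hR42 : a5 * e = 0 := by rw [mul_comm]; exact hZw5
  have hRw43 : (u * a1) * (u * z) = c5 • e + a5 := by rw [mul_comm]; exact hw5
  have hE44 : e * ((u * a1) * (z * z)) = (2⁻¹ : F) • ((u * a1) * (z * z)) := he.fusionUZ (u * a1) (z * z) hE9 hE7
  have hR45 : ((u * a1) * (z * z)) * e = (2⁻¹ : F) • ((u * a1) * (z * z)) := by rw [mul_comm]; exact hE44
  have hE46 : e * (u * a2) = (2⁻¹ : F) • (u * a2) := he.fusionUZ u a2 hu hZw2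
  have hR47 : (u * a2) * e = (2⁻¹ : F) • (u * a2) := by rw [mul_comm]; exact hE46
  have hC48 : a2 * u = u * a2 := mul_comm _ _
  have hE49 : e * (a1 * a2) = 0 := he.fusionZZ a1 a2 hZw1 hZw2
  have hR50 : (a1 * a2) * e = 0 := by rw [mul_comm]; exact hE49
  have hC51 : a2 * a1 = a1 * a2 := mul_comm _ _
  have hE52 : e * ((u * z) * a2) = (2⁻¹ : F) • ((u * z) * a2) := he.fusionUZ (u * z) a2 hE4 hZw2
  have hR53 : ((u * z) * a2) * e = (2⁻¹ : F) • ((u * z) * a2) := by rw [mul_comm]; exact hE52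
  have hC54 : a2 * (u * z) = (u * z) * a2 := mul_comm _ _
  have hE55 : e * ((z * z) * a2) = 0 := he.fusionZZ (z * z) a2 hE7 hZw2
  have hR56 : ((z * z) * a2) * e = 0 := by rw [mul_comm]; exact hE55
  have hC57 : a2 * (z * z) = (z * z) * a2 := mul_comm _ _
  obtain ⟨c6, a6, hZw6, hw6⟩ := he.fusionUU u (u * (z * z)) hu hE13
  have hR58 : a6 * e = 0 := by rw [mul_comm]; exact hZw6
  have hRw59 : (u * (z * z)) * u = c6 • e + a6 := by rw [mul_comm]; exact hw6
  have hE60 : e * ((u * (z * z)) * a1) = (2⁻¹ : F) • ((u * (z * z)) * a1) := he.fusionUZ (u * (z * z)) a1 hE13 hZw1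
  have hR61 : ((u * (z * z)) * a1) * e = (2⁻¹ : F) • ((u * (z * z)) * a1) := by rw [mul_comm]; exact hE60
  obtain ⟨c7, a7, hZw7, hw7⟩ := he.fusionUU (u * z) (u * (z * z)) hE4 hE13
  have hR62 : a7 * e = 0 := by rw [mul_comm]; exact hZw7
  have hRw63 : (u * (z * z)) * (u * z) = c7 • e + a7 := by rw [mul_comm]; exact hw7
  have hE64 : e * ((u * (z * z)) * (z * z)) = (2⁻¹ : F) • ((u * (z * z)) * (z * z)) := he.fusionUZ (u * (z * z)) (z * z) hE13 hE7
  have hR65 : ((u * (z * z)) * (z * z)) * e = (2⁻¹ : F) • ((u * (z * z)) * (z * z)) := by rw [mul_comm]; exact hE64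
  have hE66 : e * (u * (z * a1)) = (2⁻¹ : F) • (u * (z * a1)) := he.fusionUZ u (z * a1) hu hE15
  have hR67 : (u * (z * a1)) * e = (2⁻¹ : F) • (u * (z * a1)) := by rw [mul_comm]; exact hE66
  have hC68 : (z * a1) * u = u * (z * a1) := mul_comm _ _
  have hE69 : e * (a1 * (z * a1)) = 0 := he.fusionZZ a1 (z * a1) hZw1 hE15
  have hR70 : (a1 * (z * a1)) * e = 0 := by rw [mul_comm]; exact hE69
  have hC71 : (z * a1) * a1 = a1 * (z * a1) := mul_comm _ _
  have hE72 : e * ((u * z) * (z * a1)) = (2⁻¹ : F) • ((u * z) * (z * a1)) := he.fusionUZ (u * z) (z * a1) hE4 hE15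
  have hR73 : ((u * z) * (z * a1)) * e = (2⁻¹ : F) • ((u * z) * (z * a1)) := by rw [mul_comm]; exact hE72
  have hC74 : (z * a1) * (u * z) = (u * z) * (z * a1) := mul_comm _ _
  have hE75 : e * ((z * z) * (z * a1)) = 0 := he.fusionZZ (z * z) (z * a1) hE7 hE15
  have hR76 : ((z * z) * (z * a1)) * e = 0 := by rw [mul_comm]; exact hE75
  have hC77 : (z * a1) * (z * z) = (z * z) * (z * a1) := mul_comm _ _
  obtain ⟨c8, a8, hZw8, hw8⟩ := he.fusionUU u ((u * z) * z) hu hE17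
  have hR78 : a8 * e = 0 := by rw [mul_comm]; exact hZw8
  have hRw79 : ((u * z) * z) * u = c8 • e + a8 := by rw [mul_comm]; exact hw8
  have hE80 : e * (((u * z) * z) * a1) = (2⁻¹ : F) • (((u * z) * z) * a1) := he.fusionUZ ((u * z) * z) a1 hE17 hZw1
  have hR81 : (((u * z) * z) * a1) * e = (2⁻¹ : F) • (((u * z) * z) * a1) := by rw [mul_comm]; exact hE80
  obtain ⟨c9, a9, hZw9, hw9⟩ := he.fusionUU (u * z) ((u * z) * z) hE4 hE17
  have hR82 : a9 * e = 0 := by rw [mul_comm]; exact hZw9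
  have hRw83 : ((u * z) * z) * (u * z) = c9 • e + a9 := by rw [mul_comm]; exact hw9
  have hE84 : e * (((u * z) * z) * (z * z)) = (2⁻¹ : F) • (((u * z) * z) * (z * z)) := he.fusionUZ ((u * z) * z) (z * z) hE17 hE7
  have hR85 : (((u * z) * z) * (z * z)) * e = (2⁻¹ : F) • (((u * z) * z) * (z * z)) := by rw [mul_comm]; exact hE84
  have hE86 : e * (u * (z * (z * z))) = (2⁻¹ : F) • (u * (z * (z * z))) := he.fusionUZ u (z * (z * z)) hu hE20
  have hR87 : (u * (z * (z * z))) * e = (2⁻¹ : F) • (u * (z * (z * z))) := by rw [mul_comm]; exact hE86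
  have hC88 : (z * (z * z)) * u = u * (z * (z * z)) := mul_comm _ _
  have hE89 : e * (a1 * (z * (z * z))) = 0 := he.fusionZZ a1 (z * (z * z)) hZw1 hE20
  have hR90 : (a1 * (z * (z * z))) * e = 0 := by rw [mul_comm]; exact hE89
  have hC91 : (z * (z * z)) * a1 = a1 * (z * (z * z)) := mul_comm _ _
  have hE92 : e * ((u * z) * (z * (z * z))) = (2⁻¹ : F) • ((u * z) * (z * (z * z))) := he.fusionUZ (u * z) (z * (z * z)) hE4 hE20
  have hR93 : ((u * z) * (z * (z * z))) * e = (2⁻¹ : F) • ((u * z) * (z * (z * z))) := by rw [mul_comm]; exact hE92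
  have hC94 : (z * (z * z)) * (u * z) = (u * z) * (z * (z * z)) := mul_comm _ _
  have hE95 : e * ((z * z) * (z * (z * z))) = 0 := he.fusionZZ (z * z) (z * (z * z)) hE7 hE20
  have hR96 : ((z * z) * (z * (z * z))) * e = 0 := by rw [mul_comm]; exact hE95
  have hC97 : (z * (z * z)) * (z * z) = (z * z) * (z * (z * z)) := mul_comm _ _
  have hE98 : e * (u * (a1 * a1)) = (2⁻¹ : F) • (u * (a1 * a1)) := he.fusionUZ u (a1 * a1) hu hE23
  have hR99 : (u * (a1 * a1)) * e = (2⁻¹ : F) • (u * (a1 * a1)) := by rw [mul_comm]; exact hE98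
  obtain ⟨c10, a10, hZw10, hw10⟩ := he.fusionUU u ((u * z) * a1) hu hE25
  have hR100 : a10 * e = 0 := by rw [mul_comm]; exact hZw10
  have hRw101 : ((u * z) * a1) * u = c10 • e + a10 := by rw [mul_comm]; exact hw10
  have hE102 : e * (u * (a1 * (z * z))) = (2⁻¹ : F) • (u * (a1 * (z * z))) := he.fusionUZ u (a1 * (z * z)) hu hE28
  have hR103 : (u * (a1 * (z * z))) * e = (2⁻¹ : F) • (u * (a1 * (z * z))) := by rw [mul_comm]; exact hE102
  have hE104 : e * (u * a3) = (2⁻¹ : F) • (u * a3) := he.fusionUZ u a3 hu hZw3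
  have hR105 : (u * a3) * e = (2⁻¹ : F) • (u * a3) := by rw [mul_comm]; exact hE104
  obtain ⟨c11, a11, hZw11, hw11⟩ := he.fusionUU u ((u * z) * (z * z)) hu hE31
  have hR106 : a11 * e = 0 := by rw [mul_comm]; exact hZw11
  have hRw107 : ((u * z) * (z * z)) * u = c11 • e + a11 := by rw [mul_comm]; exact hw11
  have hE108 : e * (u * ((z * z) * (z * z))) = (2⁻¹ : F) • (u * ((z * z) * (z * z))) := he.fusionUZ u ((z * z) * (z * z)) hu hE36
  have hR109 : (u * ((z * z) * (z * z))) * e = (2⁻¹ : F) • (u * ((z * z) * (z * z))) := by rw [mul_comm]; exact hE108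
  have hE110 : e * ((u * a1) * z) = (2⁻¹ : F) • ((u * a1) * z) := he.fusionUZ (u * a1) z hE9 hz
  have hR111 : ((u * a1) * z) * e = (2⁻¹ : F) • ((u * a1) * z) := by rw [mul_comm]; exact hE110
  have hC112 : z * (u * a1) = (u * a1) * z := mul_comm _ _
  have hE113 : e * (z * a2) = 0 := he.fusionZZ z a2 hz hZw2
  have hR114 : (z * a2) * e = 0 := by rw [mul_comm]; exact hE113
  have hE115 : e * ((u * (z * z)) * z) = (2⁻¹ : F) • ((u * (z * z)) * z) := he.fusionUZ (u * (z * z)) z hE13 hz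
  have hR116 : ((u * (z * z)) * z) * e = (2⁻¹ : F) • ((u * (z * z)) * z) := by rw [mul_comm]; exact hE115
  have hC117 : z * (u * (z * z)) = (u * (z * z)) * z := mul_comm _ _
  have hE118 : e * (z * (a1 * a1)) = 0 := he.fusionZZ z (a1 * a1) hz hE23
  have hR119 : (z * (a1 * a1)) * e = 0 := by rw [mul_comm]; exact hE118
  have hE120 : e * (((u * z) * a1) * z) = (2⁻¹ : F) • (((u * z) * a1) * z) := he.fusionUZ ((u * z) * a1) z hE25 hz
  have hR121 : (((u * z) * a1) * z) * e = (2⁻¹ : F) • (((u * z) * a1) * z) := by rw [mul_comm]; exact hE120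
  have hC122 : z * ((u * z) * a1) = ((u * z) * a1) * z := mul_comm _ _
  have hE123 : e * (z * (a1 * (z * z))) = 0 := he.fusionZZ z (a1 * (z * z)) hz hE28
  have hR124 : (z * (a1 * (z * z))) * e = 0 := by rw [mul_comm]; exact hE123
  have hE125 : e * (z * a3) = 0 := he.fusionZZ z a3 hz hZw3
  have hR126 : (z * a3) * e = 0 := by rw [mul_comm]; exact hE125
  have hE127 : e * (((u * z) * (z * z)) * z) = (2⁻¹ : F) • (((u * z) * (z * z)) * z) := he.fusionUZ ((u * z) * (z * z)) z hE31 hz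
  have hR128 : (((u * z) * (z * z)) * z) * e = (2⁻¹ : F) • (((u * z) * (z * z)) * z) := by rw [mul_comm]; exact hE127
  have hC129 : z * ((u * z) * (z * z)) = ((u * z) * (z * z)) * z := mul_comm _ _
  have hE130 : e * (z * ((z * z) * (z * z))) = 0 := he.fusionZZ z ((z * z) * (z * z)) hz hE36
  have hR131 : (z * ((z * z) * (z * z))) * e = 0 := by rw [mul_comm]; exact hE130
  have key : ∀ s t : F, ((1 : F) + (3 : F) * c1 * c2 * s * s * s * s * t + (4 : F) * c1 * s * s + ((5 : F)/2) * c1 * c1 * s * s * s * s + (6 : F) * c2 * s * s * t + (4 : F) * c3 * s * s * t * t + (1 : F) * c4 * s * s * s * s + (2 : F) * c5 * s * s * s * s * t + (1 : F) * c6 * s * s * t * t + (2 : F) * c7 * s * s * t * t * t + (2 : F) * c8 * s * s * t * t + (4 : F) * c9 * s * s * t * t * t) • e + (((7 : F)/4) * c1 * s * s * s + ((1 : F)/4) * c1 * c1 * s * s * s * s * s + (1 : F) * c2 * s * s * s * t + (1 : F) * s) • u + (((1 : F)/2) * c1 * s * s * s * s + (1 : F) * s * s) • a1 + ((3 : F)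 * c1 * s * s * s * t + (2 : F) * c2 * s * s * s * t * t + (2 : F) * s * t) • (u * z) + ((1 : F) * c1 * s * s * s * s * s + ((5 : F)/2) * s * s * s) • (u * a1) + ((1 : F) * c1 * s * s * s * s * t + (4 : F) * s * s * t) • a2 + ((1 : F) * c1 * s * s * s * t * t + ((3 : F)/2) * s * t * t) • (u * (z * z)) + ((1 : F) * c1 * s * s * s * t * t + (1 : F) * s * t * t) • ((u * z) * z) + ((1 : F) * s * s * s * s) • (a1 * a1) + ((4 : F) * s * s * s * t) • ((u * z) * a1) + ((1 : F) * s * s * t * t) • (a1 * (z * z)) + ((4 : F) * s * s * t * t) • a3 + ((2 : F) * s * t * t * t) • ((u * z) * (z * z)) + ((1 : F) * s * s * s * s) • a4 + ((1 : F) * s * s * s * s * s) • ((u * a1) * a1) + ((2 : F) * s * s * s * s * t) • a5 + ((1 : F) * s * s * s * t * t) • ((u * a1) * (z * z)) + ((2 : F) * s * s * s * t) • (u * a2) + ((2 : F) * s * s * s * s * t) • (a1 * a2) + ((4 : F) * s * s * s * t * t) • ((u * z) * a2) + ((2 : F) * s * s * t * t * t) • ((z * z) * a2) + ((1 : F) *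 s * s * t * t) • a6 + ((1 : F) * s * s * s * t * t) • ((u * (z * z)) * a1) + ((2 : F) * s * s * t * t * t) • a7 + ((1 : F) * s * t * t * t * t) • ((u * (z * z)) * (z * z)) + ((1 : F) * s * s * s * t) • (u * (z * a1)) + ((1 : F) * s * s * s * s * t) • (a1 * (z * a1)) + ((2 : F) * s * s * s * t * t) • ((u * z) * (z * a1)) + ((1 : F) * s * s * t * t * t) • ((z * z) * (z * a1)) + ((2 : F) * s * s * t * t) • a8 + ((2 : F) * s * s * s * t * t) • (((u * z) * z) * a1) + ((4 : F) * s * s * t * t * t) • a9 + ((2 : F) * s * t * t * t * t) • (((u * z) * z) * (z * z)) + ((1 : F) * s * t * t * t) • (u * (z * (z * z))) + ((1 : F) * s * s * t * t * t) • (a1 * (z * (z * z))) + ((2 : F) * s * t * t * t * t) • ((u * z) * (z * (z * z))) + ((1 : F) * t * t * t * t * t) • ((z * z) * (z * (z * z))) =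
      ((1 : F) + (2 : F) * c1 * c2 * s * s * s * s * t + (4 : F) * c1 * s * s + (2 : F) * c1 * c1 * s * s * s * s + (4 : F) * c10 * s * s * s * s * t + (4 : F) * c11 * s * s * t * t * t + (6 : F) * c2 * s * s * t + (4 : F) * c3 * s * s * t * t + (2 : F) * c4 * s * s * s * s + (2 : F) * c6 * s * s * t * t) • e + ((2 : F) * c1 * s * s * s + ((1 : F)/2) * c1 * c1 * s * s * s * s * s + (2 : F) * c2 * s * s * s * t + (2 : F) * c3 * s * s * s * t * t + (1 : F) * s) • u + ((1 : F) * c1 * s * s * s * s + (1 : F) * s * s) • a1 + ((2 : F) * c1 * s * s * s * t + (2 : F) * s * t) • (u * z) + ((2 : F) * s * s * s) • (u * a1) + ((2 : F) * c1 * s * s * s * s * t + (2 : F) * s * s * t) • a2 + ((1 : F) * s * t * t) • (u * (z * z)) + ((1 : F) * s * s * t) • (z * a1) + ((2 : F) * c1 * s * s * s * t * t + (2 : F) * s * t * t) • ((u * z) * z) + ((2 : F) * s * s * s * t) • ((u * z) * a1) + ((2 : F) * s * t * t * t) • ((u * z) * (z * z)) + ((2 : F) * s * s * s * s) • a4 +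 ((4 : F) * s * s * s * t) • (u * a2) + ((2 : F) * s * s * t * t) • a6 + ((1 : F) * s * s * s * s * s) • (u * (a1 * a1)) + ((4 : F) * s * s * s * s * t) • a10 + ((2 : F) * s * s * s * t * t) • (u * (a1 * (z * z))) + ((4 : F) * s * s * s * t * t) • (u * a3) + ((4 : F) * s * s * t * t * t) • a11 + ((1 : F) * s * t * t * t * t) • (u * ((z * z) * (z * z))) + ((2 : F) * s * s * s * t) • ((u * a1) * z) + ((4 : F) * s * s * t * t) • (z * a2) + ((2 : F) * s * t * t * t) • ((u * (z * z)) * z) + ((1 : F) * s * s * s * s * t) • (z * (a1 * a1)) + ((4 : F) * s * s * s * t * t) • (((u * z) * a1) * z) + ((2 : F) * s * s * t * t * t) • (z * (a1 * (z * z))) + ((4 : F) * s * s * t * t * t) • (z * a3) + ((4 : F) * s * t * t * t * t) • (((u * z) * (z * z)) * z) + ((1 : F) * t * t * t * t * t) • (z * ((z * z) * (z * z))) := by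
    intro s t
    have hx2 : (e + s • u + t • z) * (e + s • u + t • z) = ((1 : F) + (1 : F) * c1 * s * s) • e + ((1 : F) * s) • u + ((1 : F) * s * s) • a1 + ((2 : F) * s * t) • (u * z) + ((1 : F) * t * t) • (z * z) := by
      simp only [mul_add, add_mul, smul_mul_assoc, mul_smul_comm, he.idem, hu, hR1, hz, hR2, hw1, hZw1, hR3, hE4, hR5, hC6, hE7, hR8, hE9, hR10, hw2, hZw2, hR11, hRw12, hE13, hR14, hE15, hR16, hE17, hR18, hC19, hE20, hR21, hC22, hE23, hR24, hE25, hR26, hC27, hE28, hR29, hw3, hZw3, hR30, hE31, hR32, hC33, hC34, hC35, hE36, hR37, hw4, hZw4, hR38, hRw39, hE40, hR41, hw5, hZw5, hR42, hRw43, hE44, hR45, hE46, hR47, hC48, hE49, hR50, hC51, hE52, hR53, hC54, hE55, hR56, hC57, hw6, hZw6, hR58, hRw59, hE60, hR61, hw7, hZw7, hR62, hRw63, hE64, hR65, hE66, hR67, hC68, hE69, hR70, hC71, hE72, hR73, hC74, hE75, hR76, hC77, hw8, hZw8, hR78, hRw79, hE80, hR81, hw9, hZw9, hR82, hRw83, hE84,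 hR85, hE86, hR87, hC88, hE89, hR90, hC91, hE92, hR93, hC94, hE95, hR96, hC97, hE98, hR99, hw10, hZw10, hR100, hRw101, hE102, hR103, hE104, hR105, hw11, hZw11, hR106, hRw107, hE108, hR109, hE110, hR111, hC112, hE113, hR114, hE115, hR116, hC117, hE118, hR119, hE120, hR121, hC122, hE123, hR124, hE125, hR126, hE127, hR128, hC129, hE130, hR131]
      match_scalars <;> (try field_simp) <;> try ring1
    have hx3 : (e + s • u + t • z) * (((1 : F) + (1 : F) * c1 * s * s) • e + ((1 : F) * s) • u + ((1 : F) * s * s) • a1 + ((2 : F) * s * t) • (u * z) + ((1 : F) * t * t) • (z * z)) = ((1 : F) + (2 : F) * c1 * s * s + (2 : F) * c2 * s * s * t) • e + (((1 : F)/2) * c1 * s * s * s + (1 : F) * s) • u + ((1 : F) * s * s) • a1 + ((2 : F) * s * t) • (u * z) + ((1 : F) * s * s * s) • (u * a1) + ((2 : F) * s * s * t) • a2 + ((1 : F) * s * t * t) • (u * (z * z)) + ((1 : F) * s * s * t) • (z * a1) + ((2 : F) * s * t * t) • ((u * z) * z) + ((1 : F) * t * t * t) • (z * (z * z)) := by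
      simp only [mul_add, add_mul, smul_mul_assoc, mul_smul_comm, he.idem, hu, hR1, hz, hR2, hw1, hZw1, hR3, hE4, hR5, hC6, hE7, hR8, hE9, hR10, hw2, hZw2, hR11, hRw12, hE13, hR14, hE15, hR16, hE17, hR18, hC19, hE20, hR21, hC22, hE23, hR24, hE25, hR26, hC27, hE28, hR29, hw3, hZw3, hR30, hE31, hR32, hC33, hC34, hC35, hE36, hR37, hw4, hZw4, hR38, hRw39, hE40, hR41, hw5, hZw5, hR42, hRw43, hE44, hR45, hE46, hR47, hC48, hE49, hR50, hC51, hE52, hR53, hC54, hE55, hR56, hC57, hw6, hZw6, hR58, hRw59, hE60, hR61, hw7, hZw7, hR62, hRw63, hE64, hR65, hE66, hR67, hC68, hE69, hR70, hC71, hE72, hR73, hC74, hE75, hR76, hC77, hw8, hZw8, hR78, hRw79, hE80, hR81, hw9, hZw9, hR82, hRw83, hE84, hR85, hE86, hR87, hC88, hE89, hR90, hC91, hE92, hR93, hC94, hE95, hR96, hC97, hE98, hR99, hw10, hZw10, hR100, hRw101, hE102, hR103, hE104, hR105, hw11, hZw11, hR106, hRw107, hE108, hR109, hE110, hR111, hC112,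 hE113, hR114, hE115, hR116, hC117, hE118, hR119, hE120, hR121, hC122, hE123, hR124, hE125, hR126, hE127, hR128, hC129, hE130, hR131]
      match_scalars <;> (try field_simp) <;> try ring1
    have hx4 : (((1 : F) + (1 : F) * c1 * s * s) • e + ((1 : F) * s) • u + ((1 : F) * s * s) • a1 + ((2 : F) * s * t) • (u * z) + ((1 : F) * t * t) • (z * z)) * (((1 : F) + (1 : F) * c1 * s * s) • e + ((1 : F) * s) • u + ((1 : F) * s * s) • a1 + ((2 : F) * s * t) • (u * z) + ((1 : F) * t * t) • (z * z)) = ((1 : F) + (3 : F) * c1 * s * s + (1 : F) * c1 * c1 * s * s * s * s + (4 : F) * c2 * s * s * t + (4 : F) * c3 * s * s * t * t) • e + ((1 : F) * c1 * s * s * s + (1 : F) * s) • u + ((1 : F) * s * s) • a1 + ((2 : F) * c1 * s * s * s * t + (2 : F) * s * t) • (u * z) + ((2 : F) * s * s * s) • (u * a1) + ((4 : F) * s * s * t) • a2 + ((2 : F) * s * t * t) • (u * (z * z)) + ((1 : F) * s * s * s * s) • (a1 * a1) + ((4 : F) * s * s * s * t) • ((u * z) * a1) + ((2 : F) * s * s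 * t * t) • (a1 * (z * z)) + ((4 : F) * s * s * t * t) • a3 + ((4 : F) * s * t * t * t) • ((u * z) * (z * z)) + ((1 : F) * t * t * t * t) • ((z * z) * (z * z)) := by
      simp only [mul_add, add_mul, smul_mul_assoc, mul_smul_comm, he.idem, hu, hR1, hz, hR2, hw1, hZw1, hR3, hE4, hR5, hC6, hE7, hR8, hE9, hR10, hw2, hZw2, hR11, hRw12, hE13, hR14, hE15, hR16, hE17, hR18, hC19, hE20, hR21, hC22, hE23, hR24, hE25, hR26, hC27, hE28, hR29, hw3, hZw3, hR30, hE31, hR32, hC33, hC34, hC35, hE36, hR37, hw4, hZw4, hR38, hRw39, hE40, hR41, hw5, hZw5, hR42, hRw43, hE44, hR45, hE46, hR47, hC48, hE49, hR50, hC51, hE52, hR53, hC54, hE55, hR56, hC57, hw6, hZw6, hR58, hRw59, hE60, hR61, hw7, hZw7, hR62, hRw63, hE64, hR65, hE66, hR67, hC68, hE69, hR70, hC71, hE72, hR73, hC74, hE75, hR76, hC77, hw8, hZw8, hR78, hRw79, hE80, hR81, hw9, hZw9, hR82, hRw83, hE84, hR85, hE86, hR87, hC88, hE89, hR90, hC91,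 hE92, hR93, hC94, hE95, hR96, hC97, hE98, hR99, hw10, hZw10, hR100, hRw101, hE102, hR103, hE104, hR105, hw11, hZw11, hR106, hRw107, hE108, hR109, hE110, hR111, hC112, hE113, hR114, hE115, hR116, hC117, hE118, hR119, hE120, hR121, hC122, hE123, hR124, hE125, hR126, hE127, hR128, hC129, hE130, hR131]
      match_scalars <;> (try field_simp) <;> try ring1
    have hL : (((1 : F) + (2 : F) * c1 * s * s + (2 : F) * c2 * s * s * t) • e + (((1 : F)/2) * c1 * s * s * s + (1 : F) * s) • u + ((1 : F) * s * s) • a1 + ((2 : F) * s * t) • (u * z) + ((1 : F) * s * s * s) • (u * a1) + ((2 : F) * s * s * t) • a2 + ((1 : F) * s * t * t) • (u * (z * z)) + ((1 : F) * s * s * t) • (z * a1) + ((2 : F) * s * t * t) • ((u * z) * z) + ((1 : F) * t * t * t) • (z * (z * z))) * (((1 : F) + (1 : F) * c1 * s * s) • e + ((1 : F) * s) • u + ((1 : F) * s * s) • a1 + ((2 : F) * s * t) • (u * z) + ((1 : F) * t * t) • (z * z)) = ((1 : F) + (3 : F) * c1 * c2 * s * s * s * s * t + (4 : F) * c1 *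 s * s + ((5 : F)/2) * c1 * c1 * s * s * s * s + (6 : F) * c2 * s * s * t + (4 : F) * c3 * s * s * t * t + (1 : F) * c4 * s * s * s * s + (2 : F) * c5 * s * s * s * s * t + (1 : F) * c6 * s * s * t * t + (2 : F) * c7 * s * s * t * t * t + (2 : F) * c8 * s * s * t * t + (4 : F) * c9 * s * s * t * t * t) • e + (((7 : F)/4) * c1 * s * s * s + ((1 : F)/4) * c1 * c1 * s * s * s * s * s + (1 : F) * c2 * s * s * s * t + (1 : F) * s) • u + (((1 : F)/2) * c1 * s * s * s * s + (1 : F) * s * s) • a1 + ((3 : F) * c1 * s * s * s * t + (2 : F) * c2 * s * s * s * t * t + (2 : F) * s * t) • (u * z) + ((1 : F) * c1 * s * s * s * s * s + ((5 : F)/2) * s * s * s) • (u * a1) + ((1 : F) * c1 * s * s * s * s * t + (4 : F) * s * s * t) • a2 + ((1 : F) * c1 * s * s * s * t * t + ((3 : F)/2) * s * t * t) • (u * (z * z)) + ((1 : F) * c1 * s * s * s * t * t + (1 : F) * s * t * t) • ((u * z) * z) + ((1 : F) * s * s * s * s) • (a1 * a1) + ((4 : F) * s * s * s * t) • ((u *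 z) * a1) + ((1 : F) * s * s * t * t) • (a1 * (z * z)) + ((4 : F) * s * s * t * t) • a3 + ((2 : F) * s * t * t * t) • ((u * z) * (z * z)) + ((1 : F) * s * s * s * s) • a4 + ((1 : F) * s * s * s * s * s) • ((u * a1) * a1) + ((2 : F) * s * s * s * s * t) • a5 + ((1 : F) * s * s * s * t * t) • ((u * a1) * (z * z)) + ((2 : F) * s * s * s * t) • (u * a2) + ((2 : F) * s * s * s * s * t) • (a1 * a2) + ((4 : F) * s * s * s * t * t) • ((u * z) * a2) + ((2 : F) * s * s * t * t * t) • ((z * z) * a2) + ((1 : F) * s * s * t * t) • a6 + ((1 : F) * s * s * s * t * t) • ((u * (z * z)) * a1) + ((2 : F) * s * s * t * t * t) • a7 + ((1 : F) * s * t * t * t * t) • ((u * (z * z)) * (z * z)) + ((1 : F) * s * s * s * t) • (u * (z * a1)) + ((1 : F) * s * s * s * s * t) • (a1 * (z * a1)) + ((2 : F) * s * s * s * t * t) • ((u * z) * (z * a1)) + ((1 : F) * s * s * t * t * t) • ((z * z) * (z * a1)) + ((2 : F) * s * s * t * t) • a8 + ((2 : F) * s * s * s * t * t) • (((u * z) *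 z) * a1) + ((4 : F) * s * s * t * t * t) • a9 + ((2 : F) * s * t * t * t * t) • (((u * z) * z) * (z * z)) + ((1 : F) * s * t * t * t) • (u * (z * (z * z))) + ((1 : F) * s * s * t * t * t) • (a1 * (z * (z * z))) + ((2 : F) * s * t * t * t * t) • ((u * z) * (z * (z * z))) + ((1 : F) * t * t * t * t * t) • ((z * z) * (z * (z * z))) := by
      simp only [mul_add, add_mul, smul_mul_assoc, mul_smul_comm, he.idem, hu, hR1, hz, hR2, hw1, hZw1, hR3, hE4, hR5, hC6, hE7, hR8, hE9, hR10, hw2, hZw2, hR11, hRw12, hE13, hR14, hE15, hR16, hE17, hR18, hC19, hE20, hR21, hC22, hE23, hR24, hE25, hR26, hC27, hE28, hR29, hw3, hZw3, hR30, hE31, hR32, hC33, hC34, hC35, hE36, hR37, hw4, hZw4, hR38, hRw39, hE40, hR41, hw5, hZw5, hR42, hRw43, hE44, hR45, hE46, hR47, hC48, hE49, hR50, hC51, hE52, hR53, hC54, hE55, hR56, hC57, hw6, hZw6, hR58, hRw59, hE60, hR61, hw7, hZw7, hR62, hRw63, hE64, hR65, hE66, hR67, hC68, hE69, hR70, hC71,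 hE72, hR73, hC74, hE75, hR76, hC77, hw8, hZw8, hR78, hRw79, hE80, hR81, hw9, hZw9, hR82, hRw83, hE84, hR85, hE86, hR87, hC88, hE89, hR90, hC91, hE92, hR93, hC94, hE95, hR96, hC97, hE98, hR99, hw10, hZw10, hR100, hRw101, hE102, hR103, hE104, hR105, hw11, hZw11, hR106, hRw107, hE108, hR109, hE110, hR111, hC112, hE113, hR114, hE115, hR116, hC117, hE118, hR119, hE120, hR121, hC122, hE123, hR124, hE125, hR126, hE127, hR128, hC129, hE130, hR131]
      match_scalars <;> (try field_simp) <;> try ring1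
    have hR : (e + s • u + t • z) * (((1 : F) + (3 : F) * c1 * s * s + (1 : F) * c1 * c1 * s * s * s * s + (4 : F) * c2 * s * s * t + (4 : F) * c3 * s * s * t * t) • e + ((1 : F) * c1 * s * s * s + (1 : F) * s) • u + ((1 : F) * s * s) • a1 + ((2 : F) * c1 * s * s * s * t + (2 : F) * s * t) • (u * z) + ((2 : F) * s * s * s) • (u * a1) + ((4 : F) * s * s * t) • a2 + ((2 : F) * s * t * t) • (u * (z * z)) + ((1 : F) * s * s * s * s) • (a1 * a1) + ((4 : F) * s * s * s * t) • ((u * z) * a1) + ((2 : F) * s * s * t * t) • (a1 * (z * z)) + ((4 : F) * s * s * t * t) • a3 + ((4 : F) * s * t * t * t) • ((u * z) * (z * z)) + ((1 : F) * t * t * t * t) • ((z * z) * (z * z))) = ((1 : F) + (2 : F) * c1 * c2 * s * s * s * s * t + (4 : F) * c1 * s * s + (2 : F) * c1 * c1 * s * s * s * s + (4 : F) * c10 * s * s * s * s * t + (4 : F) * c11 * s * s * t * t * t + (6 : F) * c2 * s * s * t + (4 : F) * c3 * s * s * t * t + (2 : F) * c4 * s * s * s * s + (2 : F) * c6 * s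 * s * t * t) • e + ((2 : F) * c1 * s * s * s + ((1 : F)/2) * c1 * c1 * s * s * s * s * s + (2 : F) * c2 * s * s * s * t + (2 : F) * c3 * s * s * s * t * t + (1 : F) * s) • u + ((1 : F) * c1 * s * s * s * s + (1 : F) * s * s) • a1 + ((2 : F) * c1 * s * s * s * t + (2 : F) * s * t) • (u * z) + ((2 : F) * s * s * s) • (u * a1) + ((2 : F) * c1 * s * s * s * s * t + (2 : F) * s * s * t) • a2 + ((1 : F) * s * t * t) • (u * (z * z)) + ((1 : F) * s * s * t) • (z * a1) + ((2 : F) * c1 * s * s * s * t * t + (2 : F) * s * t * t) • ((u * z) * z) + ((2 : F) * s * s * s * t) • ((u * z) * a1) + ((2 : F) * s * t * t * t) • ((u * z) * (z * z)) + ((2 : F) * s * s * s * s) • a4 + ((4 : F) * s * s * s * t) • (u * a2) + ((2 : F) * s * s * t * t) • a6 + ((1 : F) * s * s * s * s * s) • (u * (a1 * a1)) + ((4 : F) * s * s * s * s * t) • a10 + ((2 : F) * s * s * s * t * t) • (u * (a1 * (z * z))) + ((4 : F) * s * s * s * t * t) • (u * a3) + ((4 : F) * s * s * t * t * t) • a11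 + ((1 : F) * s * t * t * t * t) • (u * ((z * z) * (z * z))) + ((2 : F) * s * s * s * t) • ((u * a1) * z) + ((4 : F) * s * s * t * t) • (z * a2) + ((2 : F) * s * t * t * t) • ((u * (z * z)) * z) + ((1 : F) * s * s * s * s * t) • (z * (a1 * a1)) + ((4 : F) * s * s * s * t * t) • (((u * z) * a1) * z) + ((2 : F) * s * s * t * t * t) • (z * (a1 * (z * z))) + ((4 : F) * s * s * t * t * t) • (z * a3) + ((4 : F) * s * t * t * t * t) • (((u * z) * (z * z)) * z) + ((1 : F) * t * t * t * t * t) • (z * ((z * z) * (z * z))) := by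
      simp only [mul_add, add_mul, smul_mul_assoc, mul_smul_comm, he.idem, hu, hR1, hz, hR2, hw1, hZw1, hR3, hE4, hR5, hC6, hE7, hR8, hE9, hR10, hw2, hZw2, hR11, hRw12, hE13, hR14, hE15, hR16, hE17, hR18, hC19, hE20, hR21, hC22, hE23, hR24, hE25, hR26, hC27, hE28, hR29, hw3, hZw3, hR30, hE31, hR32, hC33, hC34, hC35, hE36, hR37, hw4, hZw4, hR38, hRw39, hE40, hR41, hw5, hZw5, hR42, hRw43, hE44, hR45, hE46, hR47, hC48, hE49, hR50, hC51, hE52, hR53, hC54, hE55, hR56, hC57, hw6, hZw6, hR58, hRw59, hE60, hR61, hw7, hZw7, hR62, hRw63, hE64, hR65, hE66, hR67, hC68, hE69, hR70, hC71, hE72, hR73, hC74, hE75, hR76, hC77, hw8, hZw8, hR78, hRw79, hE80, hR81, hw9, hZw9, hR82, hRw83, hE84, hR85, hE86, hR87, hC88, hE89, hR90, hC91, hE92, hR93, hC94, hE95, hR96, hC97, hE98, hR99, hw10, hZw10, hR100, hRw101, hE102, hR103, hE104, hR105, hw11, hZw11, hR106, hRw107, hE108, hR109, hE110, hR111, hC112,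 hE113, hR114, hE115, hR116, hC117, hE118, hR119, hE120, hR121, hC122, hE123, hR124, hE125, hR126, hE127, hR128, hC129, hE130, hR131]
      match_scalars <;> (try field_simp) <;> try ring1
    have h := hid (e + s • u + t • z)
    rw [hx2, hx3, hx4, hL, hR] at h
    exact h
  have hV2 : ∀ s : F, ((2*ω^2*(ω^2-1)) * s^1 * (((1 : F)/2))) • (u * (z * z)) + ((2*ω^2*(ω^2-1)) * s^1 * ((-1 : F))) • ((u * z) * z) + ((2*ω^2*(ω^2-1)) * s^2 * ((-1 : F) * c6 + (2 : F) * c8)) • e + ((2*ω^2*(ω^2-1)) * s^2 * ((1 : F))) • (a1 * (z * z)) + ((2*ω^2*(ω^2-1)) * s^2 * ((4 : F))) • a3 + ((2*ω^2*(ω^2-1)) * s^2 * ((-1 : F))) • a6 + ((2*ω^2*(ω^2-1)) * s^2 * ((2 : F))) • a8 + ((2*ω^2*(ω^2-1)) * s^2 * ((-4 : F))) • (z * a2) + ((2*ω^2*(ω^2-1)) * s^3 * ((-2 : F) * c3)) • u + ((2*ω^2*(ω^2-1)) * s^3 * ((2 : F) * c2)) • (u * z) + ((2*ω^2*(ω^2-1))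 * s^3 * ((1 : F) * c1)) • (u * (z * z)) + ((2*ω^2*(ω^2-1)) * s^3 * ((-1 : F) * c1)) • ((u * z) * z) + ((2*ω^2*(ω^2-1)) * s^3 * ((1 : F))) • ((u * a1) * (z * z)) + ((2*ω^2*(ω^2-1)) * s^3 * ((4 : F))) • ((u * z) * a2) + ((2*ω^2*(ω^2-1)) * s^3 * ((1 : F))) • ((u * (z * z)) * a1) + ((2*ω^2*(ω^2-1)) * s^3 * ((2 : F))) • ((u * z) * (z * a1)) + ((2*ω^2*(ω^2-1)) * s^3 * ((2 : F))) • (((u * z) * z) * a1) + ((2*ω^2*(ω^2-1)) * s^3 * ((-2 : F))) • (u * (a1 * (z * z))) + ((2*ω^2*(ω^2-1)) * s^3 * ((-4 : F))) • (u * a3) + ((2*ω^2*(ω^2-1)) * s^3 * ((-4 : F))) • (((u * z) * a1) * z) = 0 := by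
    intro s
    linear_combination (norm := match_scalars <;> (try field_simp) <;> try ring1)
      (ω^4) • key s 1 + (ω^4) • key s (-1) + (-1 : F) • key s ω + (-1 : F) • key s (-ω) + (2 - 2*ω^4) • key s 0
  have hC : (4*ω^3*(ω^2-1)^2 : F) ≠ 0 := by
    have hm : (ω^2 - 1 : F) ≠ 0 := by
      intro h; rcases mul_eq_zero.mp (show (ω-1)*(ω+1) = (0:F) by rw [← h]; ring) with h'|h'
      · exact hω1 (sub_eq_zero.mp h')
      · exact hωm1 (eq_neg_of_add_eq_zero_left h')
    exact mul_ne_zero (mul_ne_zero h4 (pow_ne_zero 3 hω0)) (pow_ne_zero 2 hm)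
  have hmain : (4*ω^3*(ω^2-1)^2 : F) • ((2⁻¹ : F) • (u * (z * z)) - (u * z) * z) = 0 := by
    linear_combination (norm := match_scalars <;> (try field_simp) <;> try ring1)
      (ω^3) • hV2 1 + (-(ω^3)) • hV2 (-1) + (-1 : F) • hV2 ω + (1 : F) • hV2 (-ω)
  have h5 : ((4*ω^3*(ω^2-1)^2 : F)⁻¹ * (4*ω^3*(ω^2-1)^2 : F)) • ((2⁻¹ : F) • (u * (z * z)) - (u * z) * z) = 0 := by
    rw [mul_smul, hmain, smul_zero]
  rw [inv_mul_cancel₀ hC, one_smul, sub_eq_zero] at h5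
  exact h5.symm
end

section
/- Let e ∈ A be a half-axis and u ∈ A_{1/2}(e); write u² = δe + z' with δ ∈ 𝔽 and z' ∈ A_0(e). Then the following are equivalent: (i) u³ = δu; (ii) uz' = (1/2)δu; (iii) (eu²)u = (1/2)u³. Furthermore, if (i)–(iii) hold and u²u² = u³u, then z'² = δz'. -/
theorem stmt5 {F : Type*} [Field F] {A : Type*} [NonUnitalNonAssocCommRing A]
    [Module F A] [SMulCommClass F A A] [IsScalarTower F A A]
    (h2 : (2 : F) ≠ 0)
    (e : A) (he : IsHalfAxis F e)
    (u : A) (hu : e * u = (2⁻¹ : F) • u)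
    (δ : F) (z' : A) (hz' : e * z' = 0) (hdec : u * u = δ • e + z') :
    (((u * u) * u = δ • u) ↔ (u * z' = ((2⁻¹ : F) * δ) • u)) ∧
    (((u * u) * u = δ • u) ↔ ((e * (u * u)) * u = (2⁻¹ : F) • ((u * u) * u))) ∧
    ((((u * u) * u = δ • u) ∧ (u * z' = ((2⁻¹ : F) * δ) • u) ∧
        ((e * (u * u)) * u = (2⁻¹ : F) • ((u * u) * u))) →
      (u * u) * (u * u) = ((u * u) * u) * u → z' * z' = δ • z') := by
  have hinv : (2⁻¹ : F) ≠ 0 := inv_ne_zero h2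
  have key : (u * u) * u = ((2⁻¹ : F) * δ) • u + u * z' := by
    rw [hdec, add_mul, smul_mul_assoc, hu, mul_comm z' u, smul_smul, mul_comm δ]
  have hδ : δ • u = ((2⁻¹ : F) * δ) • u + ((2⁻¹ : F) * δ) • u := by
    rw [← add_smul]; congr 1; field_simp; ring
  have iff1 : ((u * u) * u = δ • u) ↔ (u * z' = ((2⁻¹ : F) * δ) • u) := by
    rw [key, hδ, add_right_inj]
  have heuu : e * (u * u) = δ • e := by
    rw [hdec, mul_add, mul_smul_comm, he.idem, hz', add_zero]
  have iff3 : ((u * u) * u = δ • u) ↔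
      ((e * (u * u)) * u = (2⁻¹ : F) • ((u * u) * u)) := by
    rw [iff1, heuu, smul_mul_assoc, hu, smul_smul, key, smul_add, smul_smul]
    have hc : (δ * 2⁻¹ : F) • u =
        ((2⁻¹ : F) * ((2⁻¹ : F) * δ)) • u + ((2⁻¹ : F) * ((2⁻¹ : F) * δ)) • u := by
      rw [← add_smul]; congr 1; field_simp; ring
    rw [hc, add_right_inj]
    constructor
    · intro h
      rw [h, smul_smul]
    · intro h
      have h' : ((2⁻¹:F) * ((2⁻¹:F) * δ)) • u = (2⁻¹:F) • (u * z') := h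
      rw [← smul_smul] at h'
      exact (smul_right_injective A hinv h').symm
  refine ⟨iff1, iff3, ?_⟩
  rintro ⟨h1, _, _⟩ h4
  have hze : z' * e = 0 := by rw [mul_comm]; exact hz'
  have l : (u * u) * (u * u) = (δ * δ) • e + z' * z' := by
    rw [hdec]
    simp only [add_mul, mul_add, smul_mul_assoc, mul_smul_comm, he.idem, hz', hze,
      smul_zero, add_zero, zero_add, smul_smul]
  have r : ((u * u) * u) * u = (δ * δ) • e + δ • z' := by
    rw [h1, smul_mul_assoc, hdec, smul_add, smul_smul]
  rw [l, r] at h4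
  exact add_left_cancel h4
end

section
/- Let e ∈ A be a half-axis. Assume that u³ = δ_{u²}·u and (uz)z = (1/2)·uz² hold for all u ∈ A_{1/2}(e) and z ∈ A_0(e). Then x(x²e) = x²(xe) for all x ∈ A. -/
theorem stmt6 {F : Type*} [Field F] {A : Type*} [NonUnitalNonAssocCommRing A]
    [Module F A] [SMulCommClass F A A] [IsScalarTower F A A]
    (h2 : (2 : F) ≠ 0)
    (e : A) (he : IsHalfAxis F e)
    (ha : ∀ u : A, e * u = (2⁻¹ : F) • u →
      ∀ (δ : F) (z' : A), e * z' = 0 → u * u = δ • e + z' → (u * u) * u = δ • u)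
    (hb : ∀ u z : A, e * u = (2⁻¹ : F) • u → e * z = 0 →
      (u * z) * z = (2⁻¹ : F) • (u * (z * z))) :
    ∀ x : A, x * ((x * x) * e) = (x * x) * (x * e) := by
  intro x
  obtain ⟨c, u, z, hu, hz, hx⟩ := he.decomp x
  obtain ⟨δ, z', hz', huu⟩ := he.fusionUU u u hu hu
  have hee : e * e = e := he.idem
  have hue : u * e = (2⁻¹ : F) • u := by rw [mul_comm]; exact hu
  have hze : z * e = 0 := by rw [mul_comm]; exact hz
  have hz'e : z' * e = 0 := by rw [mul_comm]; exact hz'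
  have hzz : e * (z * z) = 0 := he.fusionZZ z z hz hz
  have hzze : (z * z) * e = 0 := by rw [mul_comm]; exact hzz
  have huz : e * (u * z) = (2⁻¹ : F) • (u * z) := he.fusionUZ u z hu hz
  have huze : (u * z) * e = (2⁻¹ : F) • (u * z) := by rw [mul_comm]; exact huz
  have hzu : z * u = u * z := mul_comm z u
  have hz'u : z' * u = (2⁻¹ * δ) • u := by
    have h3 := ha u hu δ z' hz' huu
    rw [huu, add_mul, smul_mul_assoc, hu, smul_smul] at h3
    have : z' * u = δ • u - (δ * 2⁻¹) • u := by
      rw [eq_sub_iff_add_eq]; rw [add_comm]; exact h3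
    rw [this, ← sub_smul]
    congr 1
    have h21 : (2⁻¹ : F) * 2 = 1 := inv_mul_cancel₀ h2
    linear_combination (-δ) * h21
  have huz' : u * z' = (2⁻¹ * δ) • u := by rw [mul_comm]; exact hz'u
  have hzzu : (z * z) * u = u * (z * z) := mul_comm _ _
  have hzuz : z * (u * z) = (2⁻¹ : F) • (u * (z * z)) := by
    rw [mul_comm]; exact hb u z hu hz
  have huzu : (u * z) * u = u * (u * z) := mul_comm _ _
  subst hx
  have hxe : (c • e + u + z) * e = c • e + (2⁻¹ : F) • u := by
    simp [add_mul, smul_mul_assoc, hee, hue, hze]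
  have hxx : (c • e + u + z) * (c • e + u + z)
      = (c * c + δ) • e + c • u + (u * z + u * z) + (z' + z * z) := by
    simp only [mul_add, add_mul, smul_mul_assoc, mul_smul_comm, hee, hu, hue, hz, hze,
      hzu, huu, smul_add, smul_smul, smul_zero, mul_zero, zero_mul, add_zero, zero_add]
    match_scalars <;> (try field_simp) <;> (first | tauto | ring)
  have hxxe : ((c * c + δ) • e + c • u + (u * z + u * z) + (z' + z * z)) * e
      = (c * c + δ) • e + (c * 2⁻¹) • u + u * z := by
    simp only [add_mul, smul_mul_assoc, hee, hue, hze, hz'e, hzze, huze, smul_smul,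
      add_zero, zero_add, smul_add]
    match_scalars <;> (try field_simp) <;> (first | tauto | ring)
  rw [hxx, hxxe, hxe]
  simp only [mul_add, add_mul, smul_mul_assoc, mul_smul_comm, hee, hu, hue, hz, hze,
    hz', hz'e, hzze, huz, huze, huu, hzu, huz', hz'u, hzzu, hzuz, huzu, smul_add,
    smul_smul, smul_zero, mul_zero, zero_mul, add_zero, zero_add]
  match_scalars <;> (try field_simp)
  all_goals (try ring)
  all_goals exact Or.inl trivial
end

section
/- Let e ∈ A be a half-axis, u₁, u₂ ∈ U := A_{1/2}(e) and z ∈ Z := A_0(e). Then u₁(u₂z) + u₂(u₁z) = ρe + (u₁u₂)z, where ρ = φ_e(u₁(u₂z)) + φ_e(u₂(u₁z)). -/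
set_option maxHeartbeats 1600000

private lemma smul_cancel_aux {F : Type*} [Field F] {A : Type*} [AddCommGroup A]
    [Module F A] {c : F} (hc : c ≠ 0) {x y : A} (h : c • x = c • y) : x = y := by
  have h2 := congrArg (fun t => c⁻¹ • t) h
  simpa [smul_smul, inv_mul_cancel₀ hc] using h2

private lemma key_lemma {F : Type*} [Field F] {A : Type*} [NonUnitalNonAssocCommRing A]
    [Module F A] [SMulCommClass F A A] [IsScalarTower F A A]
    (h2 : (2 : F) ≠ 0)
    (hid1 : ∀ x : A, (x * x) * (x * x) = ((x * x) * x) * x)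
    {e : A} (he : IsHalfAxis F e)
    (u z : A) (hu : e * u = (2⁻¹ : F) • u) (hz : e * z = 0) :
    ∃ c : F, (2 : F) • (u * (u * z)) = c • e + (u * u) * z := by
  obtain ⟨δ, ζ, hζ, huu⟩ := he.fusionUU u u hu hu
  have huz : e * (u*z) = (2⁻¹:F) • (u*z) := he.fusionUZ u z hu hz
  have hzu : e * (z*u) = (2⁻¹:F) • (z*u) := by rw [mul_comm z u]; exact huz
  have hzz : e * (z*z) = 0 := he.fusionZZ z z hz hz
  have hζz : e * (ζ*z) = 0 := he.fusionZZ ζ z hζ hz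
  have hζu : e * (ζ*u) = (2⁻¹:F) • (ζ*u) := by
    rw [mul_comm ζ u]; exact he.fusionUZ u ζ hu hζ
  have hz3 : e * ((z*z)*z) = 0 := he.fusionZZ (z*z) z hzz hz
  have hzzu : e * ((z*z)*u) = (2⁻¹:F) • ((z*z)*u) := by
    rw [mul_comm (z*z) u]; exact he.fusionUZ u (z*z) hu hzz
  have huzz : e * ((u*z)*z) = (2⁻¹:F) • ((u*z)*z) := he.fusionUZ (u*z) z huz hz
  have hzuz : e * ((z*u)*z) = (2⁻¹:F) • ((z*u)*z) := he.fusionUZ (z*u) z hzu hz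
  obtain ⟨α, β, hβ, huw⟩ := he.fusionUU u (u*z) hu huz
  -- pass to the rescaled idempotent f = 2e with integer eigenvalues
  obtain ⟨f, hf⟩ : ∃ f : A, f = (2:F) • e := ⟨_, rfl⟩
  have hinv : (2:F) * 2⁻¹ = 1 := mul_inv_cancel₀ h2
  have hff : f * f = (2:F) • f := by
    rw [hf, smul_mul_assoc, mul_smul_comm, he.idem]
  have hfu : f * u = u := by rw [hf, smul_mul_assoc, hu, smul_smul, hinv, one_smul]
  have huf : u * f = u := by rw [mul_comm]; exact hfu
  have hfz : f * z = 0 := by rw [hf, smul_mul_assoc, hz, smul_zero]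
  have hzf : z * f = 0 := by rw [mul_comm]; exact hfz
  have hfζ : f * ζ = 0 := by rw [hf, smul_mul_assoc, hζ, smul_zero]
  have hζf : ζ * f = 0 := by rw [mul_comm]; exact hfζ
  have hfβ : f * β = 0 := by rw [hf, smul_mul_assoc, hβ, smul_zero]
  have hβf : β * f = 0 := by rw [mul_comm]; exact hfβ
  have hfuz : f * (u*z) = u*z := by rw [hf, smul_mul_assoc, huz, smul_smul, hinv, one_smul]
  have huzf : (u*z) * f = u*z := by rw [mul_comm]; exact hfuz
  have hfzu : f * (z*u) = z*u := by rw [hf, smul_mul_assoc, hzu, smul_smul, hinv, one_smul]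
  have hzuf : (z*u) * f = z*u := by rw [mul_comm]; exact hfzu
  have hfzz : f * (z*z) = 0 := by rw [hf, smul_mul_assoc, hzz, smul_zero]
  have hzzf : (z*z) * f = 0 := by rw [mul_comm]; exact hfzz
  have hfζz : f * (ζ*z) = 0 := by rw [hf, smul_mul_assoc, hζz, smul_zero]
  have hζzf : (ζ*z) * f = 0 := by rw [mul_comm]; exact hfζz
  have hfζu : f * (ζ*u) = ζ*u := by rw [hf, smul_mul_assoc, hζu, smul_smul, hinv, one_smul]
  have hζuf : (ζ*u) * f = ζ*u := by rw [mul_comm]; exact hfζu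
  have hfz3 : f * ((z*z)*z) = 0 := by rw [hf, smul_mul_assoc, hz3, smul_zero]
  have hz3f : ((z*z)*z) * f = 0 := by rw [mul_comm]; exact hfz3
  have hfzzu : f * ((z*z)*u) = (z*z)*u := by
    rw [hf, smul_mul_assoc, hzzu, smul_smul, hinv, one_smul]
  have hzzuf : ((z*z)*u) * f = (z*z)*u := by rw [mul_comm]; exact hfzzu
  have hfuzz : f * ((u*z)*z) = (u*z)*z := by
    rw [hf, smul_mul_assoc, huzz, smul_smul, hinv, one_smul]
  have huzzf : ((u*z)*z) * f = (u*z)*z := by rw [mul_comm]; exact hfuzz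
  have hfzuz : f * ((z*u)*z) = (z*u)*z := by
    rw [hf, smul_mul_assoc, hzuz, smul_smul, hinv, one_smul]
  have hzuzf : ((z*u)*z) * f = (z*u)*z := by rw [mul_comm]; exact hfzuz
  obtain ⟨δ₂, hδ₂⟩ : ∃ d : F, d = 2⁻¹ * δ := ⟨_, rfl⟩
  have hsδ : (2⁻¹ * δ) * 2 = δ := by
    rw [mul_comm (2⁻¹:F) δ, mul_assoc, inv_mul_cancel₀ h2, mul_one]
  have huuf : u * u = δ₂ • f + ζ := by rw [huu, hδ₂, hf, smul_smul, hsδ]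
  obtain ⟨α₂, hα₂⟩ : ∃ d : F, d = 2⁻¹ * α := ⟨_, rfl⟩
  have hsα : (2⁻¹ * α) * 2 = α := by
    rw [mul_comm (2⁻¹:F) α, mul_assoc, inv_mul_cancel₀ h2, mul_one]
  have huwf : u * (u*z) = α₂ • f + β := by rw [huw, hα₂, hf, smul_smul, hsα]
  have huwf2 : (u*z) * u = α₂ • f + β := by rw [mul_comm]; exact huwf
  have huwf3 : u * (z*u) = α₂ • f + β := by rw [mul_comm z u]; exact huwf
  have huwf4 : (z*u) * u = α₂ • f + β := by rw [mul_comm (z*u) u, mul_comm z u]; exact huwf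
  have main :
      (((f+u+z)*(f+u+z))*((f+u+z)*(f+u+z))) + (((f-u+z)*(f-u+z))*((f-u+z)*(f-u+z))) + ((((f+u-z)*(f+u-z))*(f+u-z))*(f+u-z)) + ((((f-u-z)*(f-u-z))*(f-u-z))*(f-u-z)) + (2:F)•((((f+z)*(f+z))*(f+z))*(f+z)) + (2:F)•(((f-z)*(f-z))*((f-z)*(f-z)))
      =
      ((((f+u+z)*(f+u+z))*(f+u+z))*(f+u+z)) + ((((f-u+z)*(f-u+z))*(f-u+z))*(f-u+z)) + (((f+u-z)*(f+u-z))*((f+u-z)*(f+u-z))) + (((f-u-z)*(f-u-z))*((f-u-z)*(f-u-z))) + (2:F)•(((f+z)*(f+z))*((f+z)*(f+z))) + (2:F)•((((f-z)*(f-z))*(f-z))*(f-z)) := by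
    rw [hid1 (f+u+z), hid1 (f-u+z), hid1 (f+u-z), hid1 (f-u-z), hid1 (f+z), hid1 (f-z)]
  have h1 : (16:F) • β - (8:F) • (ζ*z)
      =
      ((((f+u+z)*(f+u+z))*((f+u+z)*(f+u+z))) + (((f-u+z)*(f-u+z))*((f-u+z)*(f-u+z))) + ((((f+u-z)*(f+u-z))*(f+u-z))*(f+u-z)) + ((((f-u-z)*(f-u-z))*(f-u-z))*(f-u-z)) + (2:F)•((((f+z)*(f+z))*(f+z))*(f+z)) + (2:F)•(((f-z)*(f-z))*((f-z)*(f-z))))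
      -
      (((((f+u+z)*(f+u+z))*(f+u+z))*(f+u+z)) + ((((f-u+z)*(f-u+z))*(f-u+z))*(f-u+z)) + (((f+u-z)*(f+u-z))*((f+u-z)*(f+u-z))) + (((f-u-z)*(f-u-z))*((f-u-z)*(f-u-z))) + (2:F)•(((f+z)*(f+z))*((f+z)*(f+z))) + (2:F)•((((f-z)*(f-z))*(f-z))*(f-z))) := by
    simp only [mul_add, add_mul, mul_sub, sub_mul, smul_mul_assoc, mul_smul_comm, smul_add, smul_sub, smul_smul, neg_mul, mul_neg, neg_neg, smul_neg, neg_smul, mul_zero, zero_mul, add_zero, zero_add, smul_zero, zero_smul, sub_zero, zero_sub, neg_zero, hff, hfu, huf, hfz, hzf, hfζ, hζf, hfβ, hβf, hfuz, huzf, hfzu, hzuf, hfzz, hzzf, hfζz, hζzf, hfζu, hζuf, hfz3, hz3f, hfzzu, hzzuf, hfuzz, huzzf, hfzuz, hzuzf, huuf, huwf, huwf2, huwf3, huwf4]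
    module
  rw [main, sub_self] at h1
  have h16 : (16:F) • β = (8:F) • (ζ*z) := sub_eq_zero.mp h1
  have h8ne : (8:F) ≠ 0 := by
    have : (8:F) = 2 * 2 * 2 := by norm_num
    rw [this]; exact mul_ne_zero (mul_ne_zero h2 h2) h2
  have hβζ : (2:F) • β = ζ * z := by
    apply smul_cancel_aux h8ne
    rw [smul_smul, show (8:F) * 2 = 16 by norm_num, h16]
  refine ⟨2*α, ?_⟩
  rw [huw, huu, add_mul, smul_mul_assoc, hz, smul_zero, zero_add, ← hβζ]
  module

theorem stmt7 {F : Type*} [Field F] {A : Type*} [NonUnitalNonAssocCommRing A]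
    [Module F A] [SMulCommClass F A A] [IsScalarTower F A A]
    (h2 : (2 : F) ≠ 0) (hF : 3 < Cardinal.mk F)
    (hid1 : ∀ x : A, (x * x) * (x * x) = ((x * x) * x) * x)
    (hid2 : ∀ x : A, ((x * x) * x) * (x * x) = x * (((x * x) * x) * x))
    (e : A) (he : IsHalfAxis F e)
    (u₁ u₂ z : A) (hu₁ : e * u₁ = (2⁻¹ : F) • u₁) (hu₂ : e * u₂ = (2⁻¹ : F) • u₂)
    (hz : e * z = 0) :
    ∀ (c₁ c₂ : F) (v₁ v₂ w₁ w₂ : A),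
      e * v₁ = (2⁻¹ : F) • v₁ → e * w₁ = 0 → u₁ * (u₂ * z) = c₁ • e + v₁ + w₁ →
      e * v₂ = (2⁻¹ : F) • v₂ → e * w₂ = 0 → u₂ * (u₁ * z) = c₂ • e + v₂ + w₂ →
      u₁ * (u₂ * z) + u₂ * (u₁ * z) = (c₁ + c₂) • e + (u₁ * u₂) * z := by
  intro c₁ c₂ v₁ v₂ w₁ w₂ hv₁ hw₁ hd₁ hv₂ hw₂ hd₂
  have hu12 : e * (u₁ + u₂) = (2⁻¹:F) • (u₁ + u₂) := by
    rw [mul_add, hu₁, hu₂, smul_add]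
  obtain ⟨a₀, k₀⟩ := key_lemma h2 hid1 he (u₁ + u₂) z hu12 hz
  obtain ⟨a₁, k₁⟩ := key_lemma h2 hid1 he u₁ z hu₁ hz
  obtain ⟨a₂, k₂⟩ := key_lemma h2 hid1 he u₂ z hu₂ hz
  have exp0 : (u₁+u₂)*((u₁+u₂)*z)
      = u₁*(u₁*z) + u₁*(u₂*z) + u₂*(u₁*z) + u₂*(u₂*z) := by
    simp only [add_mul, mul_add]; abel
  have exp1 : ((u₁+u₂)*(u₁+u₂))*z
      = (u₁*u₁)*z + (u₁*u₂)*z + (u₁*u₂)*z + (u₂*u₂)*z := by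
    simp only [add_mul, mul_add, mul_comm u₂ u₁]; abel
  have pol2 : (2:F) • (u₁*(u₂*z) + u₂*(u₁*z))
      = (a₀ - a₁ - a₂) • e + (2:F) • ((u₁*u₂)*z) := by
    linear_combination (norm := module) k₀ - (2:F) • exp0 + exp1 - k₁ - k₂
  obtain ⟨γ, η, hη, hγη⟩ := he.fusionUU u₁ u₂ hu₁ hu₂
  have hZ12 : e * ((u₁*u₂)*z) = 0 := by
    rw [hγη, add_mul, smul_mul_assoc, hz, smul_zero, zero_add]
    exact he.fusionZZ η z hη hz
  have hvv : e * ((2:F) • (v₁ + v₂)) = (2⁻¹:F) • ((2:F) • (v₁ + v₂)) := by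
    rw [mul_smul_comm, mul_add, hv₁, hv₂]
    module
  have hww : e * ((2:F) • (w₁ + w₂) - (2:F) • ((u₁*u₂)*z)) = 0 := by
    rw [mul_sub, mul_smul_comm, mul_smul_comm, mul_add, hw₁, hw₂, hZ12]
    simp
  have hsum : ((2:F) * (c₁ + c₂) - (a₀ - a₁ - a₂)) • e + ((2:F) • (v₁ + v₂))
      + ((2:F) • (w₁ + w₂) - (2:F) • ((u₁*u₂)*z)) = 0 := by
    linear_combination (norm := module) pol2 - (2:F) • hd₁ - (2:F) • hd₂
  obtain ⟨hc, -, -⟩ := he.indep _ _ _ hvv hww hsum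
  have hc' : a₀ - a₁ - a₂ = (2:F) * (c₁ + c₂) := (sub_eq_zero.mp hc).symm
  apply smul_cancel_aux h2
  rw [pol2, hc']
  module
end

section
/- Let e and f be half-axes of A with f ≠ e, and write f = γe + u₁ + z with γ ∈ 𝔽, u₁ ∈ A_{1/2}(e), z ∈ A_0(e); write u₁² = δ₁e + z₁ with δ₁ ∈ 𝔽 and z₁ ∈ A_0(e). Then: (1) u₁z = −(1/2)(γ − 1)u₁; (2) z₁ = z − z²; (3) γ − γ² = δ₁. -/
theorem stmt12 {F : Type*} [Field F] {A : Type*} [NonUnitalNonAssocCommRing A]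
    [Module F A] [SMulCommClass F A A] [IsScalarTower F A A]
    (h2 : (2 : F) ≠ 0)
    (e f : A) (he : IsHalfAxis F e) (hf : IsHalfAxis F f) (hne : f ≠ e)
    (γ δ₁ : F) (u₁ z z₁ : A)
    (hu₁ : e * u₁ = (2⁻¹ : F) • u₁) (hz : e * z = 0) (hz₁ : e * z₁ = 0)
    (hfdec : f = γ • e + u₁ + z) (hdec1 : u₁ * u₁ = δ₁ • e + z₁) :
    (u₁ * z = (-(2⁻¹ : F) * (γ - 1)) • u₁) ∧
    (z₁ = z - z * z) ∧
    (γ - γ * γ = δ₁) := by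
  have hw : e * (u₁ * z) = (2⁻¹ : F) • (u₁ * z) := he.fusionUZ _ _ hu₁ hz
  have hzz : e * (z * z) = 0 := he.fusionZZ _ _ hz hz
  have c1 : u₁ * e = (2⁻¹ : F) • u₁ := by rw [mul_comm]; exact hu₁
  have c2 : z * e = 0 := by rw [mul_comm]; exact hz
  have c3 : z * u₁ = u₁ * z := mul_comm _ _
  have hf2 : (γ • e + u₁ + z) * (γ • e + u₁ + z) = γ • e + u₁ + z := by
    rw [← hfdec]; exact hf.idem
  have expand : (γ • e + u₁ + z) * (γ • e + u₁ + z)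
      = (γ * γ + δ₁) • e + ((γ * 2⁻¹ + γ * 2⁻¹) • u₁ + (2 : F) • (u₁ * z))
        + (z₁ + z * z) := by
    simp only [mul_add, add_mul, smul_mul_assoc, mul_smul_comm, he.idem, hu₁, hz, c1, c2, c3,
      hdec1, smul_zero, mul_zero, zero_mul, add_zero, zero_add, smul_add]
    module
  have key : ((γ * γ + δ₁) - γ) • e
      + (((γ * 2⁻¹ + γ * 2⁻¹ - 1) • u₁ + (2 : F) • (u₁ * z)))
      + ((z₁ + z * z) - z) = 0 := by
    have h0 : (γ • e + u₁ + z) * (γ • e + u₁ + z) - (γ • e + u₁ + z) = 0 :=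
      sub_eq_zero.mpr hf2
    rw [expand] at h0
    rw [← h0]
    module
  have heU : e * ((γ * 2⁻¹ + γ * 2⁻¹ - 1) • u₁ + (2 : F) • (u₁ * z))
      = (2⁻¹ : F) • ((γ * 2⁻¹ + γ * 2⁻¹ - 1) • u₁ + (2 : F) • (u₁ * z)) := by
    rw [mul_add, mul_smul_comm, mul_smul_comm, hu₁, hw]
    module
  have heZ : e * ((z₁ + z * z) - z) = 0 := by
    rw [mul_sub, mul_add, hz₁, hzz, hz]; abel
  obtain ⟨hc, hU, hZ⟩ := he.indep _ _ _ heU heZ key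
  refine ⟨?_, ?_, ?_⟩
  · have h2' : (2⁻¹ : F) * 2 = 1 := inv_mul_cancel₀ h2
    have hU' : (2 : F) • (u₁ * z) = (1 - (γ * 2⁻¹ + γ * 2⁻¹)) • u₁ := by
      have := sub_eq_zero.mpr hU.symm
      rw [← sub_eq_zero]
      rw [← hU]
      module
    calc u₁ * z = ((2⁻¹ : F) * 2) • (u₁ * z) := by rw [h2', one_smul]
      _ = (2⁻¹ : F) • ((2 : F) • (u₁ * z)) := by rw [mul_smul]
      _ = (2⁻¹ : F) • ((1 - (γ * 2⁻¹ + γ * 2⁻¹)) • u₁) := by rw [hU']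
      _ = (-(2⁻¹ : F) * (γ - 1)) • u₁ := by
          rw [smul_smul]; congr 1; field_simp; ring
  · rw [← sub_eq_zero]
    have h : z₁ - (z - z * z) = z₁ + z * z - z := by abel
    rw [h]; exact hZ
  · linear_combination -hc
end

section
/- Let e and f be half-axes of A with f ≠ e, and write f = γe + u₁ + z with γ ∈ 𝔽, u₁ ∈ A_{1/2}(e), z ∈ A_0(e); write u₁² = δ₁e + z₁ with δ₁ ∈ 𝔽 and z₁ ∈ A_0(e). Then: (1) z² = (1 − γ)z; (2) z₁ = γz; (3) if γ ≠ 0 then u₁ ≠ 0 and z = γ⁻¹u₁² − γ⁻¹δ₁e; (4) if γ = 0 then f = u₁ + z with u₁² = 0 and zu₁ = (1/2)u₁, so in particular u₁ ∈ A_{1/2}(f). -/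
namespace IsHalfAxis

variable {F : Type*} [Field F] {A : Type*} [NonUnitalNonAssocCommRing A]
  [Module F A] [SMulCommClass F A A] [IsScalarTower F A A] {e : A}

theorem decomp_unique (he : IsHalfAxis F e) {c c' : F} {u u' z z' : A}
    (hu : e * u = (2⁻¹ : F) • u) (hu' : e * u' = (2⁻¹ : F) • u')
    (hz : e * z = 0) (hz' : e * z' = 0) (h : c • e + u + z = c' • e + u' + z') :
    c = c' ∧ u = u' ∧ z = z' := by
  obtain ⟨hc, hu, hz⟩ := he.indep (c - c') (u - u') (z - z')
    (by rw [mul_sub, hu, hu', smul_sub]) (by rw [mul_sub, hz, hz', sub_zero])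
    (by rw [← sub_eq_zero] at h; rw [← h]; module)
  exact ⟨sub_eq_zero.mp hc, sub_eq_zero.mp hu, sub_eq_zero.mp hz⟩

theorem eq_zero_of_smul_add_eq_zero (he : IsHalfAxis F e) {c : F} {z : A} (hz : e * z = 0)
    (h : c • e + z = 0) : c = 0 ∧ z = 0 := by
  obtain ⟨hc, -, hz⟩ := he.indep c 0 z (by rw [mul_zero, smul_zero]) hz (by rwa [add_zero])
  exact ⟨hc, hz⟩

theorem exists_two_smul_mul_mul_sub_mul_eq_smul (he : IsHalfAxis F e) (x : A) :
    ∃ c : F, (2 : F) • (e * (e * x)) - e * x = c • e := by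
  obtain ⟨c, u, z, hu, hz, rfl⟩ := he.decomp x
  have hex : e * (c • e + u + z) = c • e + (2⁻¹ : F) • u := by
    rw [mul_add, mul_add, mul_smul_comm, he.idem, hu, hz, add_zero]
  have hquarter : (2 : F) * (2⁻¹ * 2⁻¹) = 2⁻¹ := by
    rcases eq_or_ne (2 : F) 0 with h | h
    · simp [h]
    · field_simp
  refine ⟨c, ?_⟩
  rw [hex, mul_add, mul_smul_comm, mul_smul_comm, he.idem, hu, smul_smul]
  match_scalars
  · ring
  · linear_combination hquarter

theorem components_of_isIdempotentElem (he : IsHalfAxis F e) (h2 : (2 : F) ≠ 0)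
    {γ δ : F} {u z z₁ : A} (hu : e * u = (2⁻¹ : F) • u) (hz : e * z = 0) (hz₁ : e * z₁ = 0)
    (hsq : u * u = δ • e + z₁) (hidem : IsIdempotentElem (γ • e + u + z)) :
    δ = γ - γ * γ ∧ u * z = ((1 - γ) * 2⁻¹) • u ∧ z * z = z - z₁ := by
  have hsq' : (γ • e + u + z) * (γ • e + u + z)
      = (γ * γ + δ) • e + (γ • u + (2 : F) • (u * z)) + (z₁ + z * z) := by
    simp only [add_mul, mul_add, smul_mul_assoc, mul_smul_comm, he.idem, hu, hz, mul_comm u e,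
      mul_comm z e, mul_comm z u, hsq, smul_smul, smul_zero, add_zero, zero_add, smul_add]
    match_scalars <;> field_simp <;> ring
  rw [hidem.eq] at hsq'
  obtain ⟨hc, hU, hZ⟩ := he.decomp_unique
    (by simp only [mul_add, mul_smul_comm, hu, he.fusionUZ u z hu hz]; module)
    hu (by rw [mul_add, hz₁, he.fusionZZ z z hz hz, add_zero]) hz hsq'.symm
  refine ⟨by linear_combination hc, ?_, eq_sub_of_add_eq' hZ⟩
  have h2uz : (2 : F) • (u * z) = (1 - γ) • u := by
    linear_combination (norm := module) hU
  rw [mul_comm (1 - γ), ← smul_smul, ← h2uz, smul_smul, inv_mul_cancel₀ h2, one_smul]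

theorem zeroComponent_sq_halfComponent_eq_smul {f : A} (he : IsHalfAxis F e)
    (hf : IsHalfAxis F f) (h2 : (2 : F) ≠ 0)
    {γ δ : F} {u z z₁ : A} (hu : e * u = (2⁻¹ : F) • u) (hz : e * z = 0) (hz₁ : e * z₁ = 0)
    (hsq : u * u = δ • e + z₁) (hfdec : f = γ • e + u + z) : z₁ = γ • z := by
  obtain ⟨hδ, huz, -⟩ :=
    he.components_of_isIdempotentElem h2 hu hz hz₁ hsq (hfdec ▸ hf.idem)
  have hfe : f * e = γ • e + (2⁻¹ : F) • u := by
    rw [hfdec, add_mul, add_mul, smul_mul_assoc, he.idem, mul_comm u e, hu, mul_comm z e, hz,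
      add_zero]
  have hfu : f * u = δ • e + (2⁻¹ : F) • u + z₁ := by
    rw [hfdec, add_mul, add_mul, smul_mul_assoc, hu, hsq, mul_comm z u, huz]
    module
  have hproj : (2 : F) • (f * (f * e)) - f * e = γ • f + (z₁ - γ • z) := by
    rw [hfe, mul_add, mul_smul_comm, mul_smul_comm, hfe, hfu, hfdec, hδ]
    match_scalars <;> field_simp <;> ring
  obtain ⟨c, hc⟩ := hf.exists_two_smul_mul_mul_sub_mul_eq_smul e
  have hd : ((c - γ) * γ) • e + (c - γ) • u + (c - γ) • z
      = (0 : F) • e + 0 + (z₁ - γ • z) := by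
    rw [zero_smul, zero_add, zero_add, ← sub_eq_iff_eq_add'.mpr hproj, hc, hfdec]
    module
  obtain ⟨hdγ, hdu, hdz⟩ := he.decomp_unique (by rw [mul_smul_comm, hu, smul_comm]) (by simp)
    (by rw [mul_smul_comm, hz, smul_zero])
    (by rw [mul_sub, mul_smul_comm, hz, hz₁, smul_zero, sub_zero]) hd
  rcases eq_or_ne c γ with rfl | hcγ
  · rwa [sub_self, zero_smul, eq_comm, sub_eq_zero] at hdz
  · have hγ : γ = 0 := (mul_eq_zero.mp hdγ).resolve_left (sub_ne_zero.mpr hcγ)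
    have hu0 : u = 0 := (smul_eq_zero.mp hdu).resolve_left (sub_ne_zero.mpr hcγ)
    have hz₁0 : z₁ = 0 :=
      (he.eq_zero_of_smul_add_eq_zero hz₁ (by rw [← hsq, hu0, mul_zero])).2
    rw [hz₁0, hγ, zero_smul]

end IsHalfAxis

theorem stmt13 {F : Type*} [Field F] {A : Type*} [NonUnitalNonAssocCommRing A]
    [Module F A] [SMulCommClass F A A] [IsScalarTower F A A]
    (h2 : (2 : F) ≠ 0)
    (e f : A) (he : IsHalfAxis F e) (hf : IsHalfAxis F f) (hne : f ≠ e)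
    (γ δ₁ : F) (u₁ z z₁ : A)
    (hu₁ : e * u₁ = (2⁻¹ : F) • u₁) (hz : e * z = 0) (hz₁ : e * z₁ = 0)
    (hfdec : f = γ • e + u₁ + z) (hdec1 : u₁ * u₁ = δ₁ • e + z₁) :
    (z * z = (1 - γ) • z) ∧
    (z₁ = γ • z) ∧
    (γ ≠ 0 → u₁ ≠ 0 ∧ z = γ⁻¹ • (u₁ * u₁) - (γ⁻¹ * δ₁) • e) ∧
    (γ = 0 → f = u₁ + z ∧ u₁ * u₁ = 0 ∧ z * u₁ = (2⁻¹ : F) • u₁ ∧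
      f * u₁ = (2⁻¹ : F) • u₁) := by
  obtain ⟨hδ, huz, hzz⟩ :=
    he.components_of_isIdempotentElem h2 hu₁ hz hz₁ hdec1 (hfdec ▸ hf.idem)
  have hz₁γ : z₁ = γ • z :=
    he.zeroComponent_sq_halfComponent_eq_smul hf h2 hu₁ hz hz₁ hdec1 hfdec
  refine ⟨by rw [hzz, hz₁γ]; module, hz₁γ, fun hγ => ⟨?_, ?_⟩, fun hγ => ?_⟩
  · rintro rfl
    obtain ⟨hδ0, hz₁0⟩ := he.eq_zero_of_smul_add_eq_zero hz₁ (by rw [← hdec1, mul_zero])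
    have hγ1 : γ = 1 := by
      have h : γ * (1 - γ) = 0 := by linear_combination hδ0 - hδ
      exact (sub_eq_zero.mp ((mul_eq_zero.mp h).resolve_left hγ)).symm
    have hz0 : z = 0 := by rw [← one_smul F z, ← hγ1, ← hz₁γ, hz₁0]
    exact hne (by rw [hfdec, hγ1, hz0, one_smul, add_zero, add_zero])
  · rw [hdec1, hz₁γ, smul_add, smul_smul, smul_smul, inv_mul_cancel₀ hγ, one_smul,
      add_sub_cancel_left]
  · subst hγ
    have hsq0 : u₁ * u₁ = 0 := by
      rw [hdec1, hz₁γ, hδ, zero_smul, mul_zero, sub_zero, zero_smul, add_zero]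
    have hzu : z * u₁ = (2⁻¹ : F) • u₁ := by rw [mul_comm, huz, sub_zero, one_mul]
    have hf0 : f = u₁ + z := by rw [hfdec, zero_smul, zero_add]
    exact ⟨hf0, hsq0, hzu, by rw [hf0, add_mul, hsq0, zero_add, hzu]⟩
end

section
/- Let e ∈ A be a half-axis, u₁ ∈ U := A_{1/2}(e) and z ∈ Z := A_0(e). Then u₁²(u₁z) = u₁(u₁²z). -/
/-!
Linearizing `x²x² = x³x` and `x³x² = x·x⁴` (the field has an element `t` with `t³ ≠ t`, which
separates the linear term from the cubic one in the odd part of `t ↦ f (x + t y)`) gives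
identities that can be evaluated at `u`, `e`, `z` with the fusion rules. Write `u² = c e + w`
and `(uz)u = b e + w₁` with `w, w₁ ∈ Z`. The linearized degree-four identity at `(u, e)` gives
`w u = (c/2) u`; its odd part at `(u ± e, z)` gives `2 w₁ = w z`; at `(u, z)` and together with
the odd part of the linearized degree-five identity at `(u ± e, z)` it gives
`(uz) w = (b/2) u` and `(wz) u = (b/2) u + (c/2) uz`. Both sides of the claim then equal
`(b/2) u + (c/2) uz`.
-/

theorem exists_pow_three_ne_self {F : Type*} [Field F] (hF : 3 < Cardinal.mk F) :
    ∃ t : F, t ^ 3 ≠ t := by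
  classical
  by_contra! h
  have hsub : (Set.univ : Set F) ⊆ ↑({0, 1, -1} : Finset F) := fun t _ => by
    have ht : t * ((t - 1) * (t + 1)) = 0 := by linear_combination h t
    rcases mul_eq_zero.1 ht with h0 | ht
    · simp [h0]
    rcases mul_eq_zero.1 ht with h1 | h1
    · simp [sub_eq_zero.1 h1]
    · simp [eq_neg_of_add_eq_zero_left h1]
  have hle := Cardinal.mk_le_mk_of_subset hsub
  rw [Cardinal.mk_univ, Finset.coe_sort_coe, Cardinal.mk_coe_finset] at hle
  exact (hF.trans_le (hle.trans (by exact_mod_cast Finset.card_le_three))).false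

section Linearization

variable {A : Type*} [NonUnitalNonAssocCommRing A]

def defect₄ (x : A) : A := (x * x) * (x * x) - ((x * x) * x) * x

def defect₅ (x : A) : A := ((x * x) * x) * (x * x) - x * (((x * x) * x) * x)

/-- The coefficient of `t` in `defect₄ (x + t • y)`. -/
def linDefect₄ (x y : A) : A :=
  4 • ((x * x) * (x * y)) - 2 • (((x * y) * x) * x) - ((x * x) * y) * x - ((x * x) * x) * y

/-- The coefficient of `t` in `defect₅ (x + t • y)`. -/
def linDefect₅ (x y : A) : A :=
  (2 • ((x * y) * x) + (x * x) * y) * (x * x) + 2 • (((x * x) * x) * (x * y))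
    - (((x * x) * x) * x) * y - x * ((2 • ((x * y) * x) + (x * x) * y) * x + ((x * x) * x) * y)

variable {F : Type*} [Field F] [Module F A] [SMulCommClass F A A] [IsScalarTower F A A]

/-- Subtracting `t ^ 3` times the case `t = 1` cancels the cubic term without having to name it. -/
theorem defect₄_linearization (x y : A) (t : F) :
    defect₄ (x + t • y) - defect₄ (x - t • y) - t ^ 3 • (defect₄ (x + y) - defect₄ (x - y)) =
      (2 * (t - t ^ 3)) • linDefect₄ x y := by
  simp only [defect₄, linDefect₄, add_mul, mul_add, sub_mul, mul_sub, smul_mul_assoc, mul_smul_comm]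
  -- `simp` uses `mul_comm` as an ordered rewrite: a normal form for commutative monomials
  simp only [mul_comm]
  module

theorem defect₅_linearization (x y : A) (t : F) :
    defect₅ (x + t • y) - defect₅ (x - t • y) - t ^ 3 • (defect₅ (x + y) - defect₅ (x - y)) =
      (2 * (t - t ^ 3)) • linDefect₅ x y + (2 * (t ^ 5 - t ^ 3)) • defect₅ y := by
  simp only [defect₅, linDefect₅, add_mul, mul_add, sub_mul, mul_sub, smul_mul_assoc, mul_smul_comm]
  simp only [mul_comm]
  module

theorem linDefect₄_eq_zero (h2 : (2 : F) ≠ 0) (hF : 3 < Cardinal.mk F)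
    (h : ∀ x : A, defect₄ x = 0) (x y : A) : linDefect₄ x y = 0 := by
  obtain ⟨t, ht⟩ := exists_pow_three_ne_self hF
  have key := defect₄_linearization x y t
  simp only [h, sub_zero, smul_zero] at key
  exact (smul_eq_zero.1 key.symm).resolve_left (mul_ne_zero h2 (sub_ne_zero.2 ht.symm))

theorem linDefect₅_eq_zero (h2 : (2 : F) ≠ 0) (hF : 3 < Cardinal.mk F)
    (h : ∀ x : A, defect₅ x = 0) (x y : A) : linDefect₅ x y = 0 := by
  obtain ⟨t, ht⟩ := exists_pow_three_ne_self hF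
  have key := defect₅_linearization x y t
  simp only [h, sub_zero, smul_zero, add_zero] at key
  exact (smul_eq_zero.1 key.symm).resolve_left (mul_ne_zero h2 (sub_ne_zero.2 ht.symm))

end Linearization

namespace IsHalfAxis

variable {F A : Type*} [Field F] [NonUnitalNonAssocCommRing A] [Module F A]
  [SMulCommClass F A A] [IsScalarTower F A A] {e u z w w₁ : A} {b c : F}

theorem zeroPart_mul_eq (he : IsHalfAxis F e) (h2 : (2 : F) ≠ 0)
    (hD₄ : ∀ x y : A, linDefect₄ x y = 0) (hu : e * u = (2⁻¹ : F) • u)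
    (huu : u * u = c • e + w) (hw : e * w = 0) :
    w * u = (2⁻¹ * c) • u := by
  have hwu : e * (w * u) = (2⁻¹ : F) • (w * u) := by
    rw [mul_comm w]; exact he.fusionUZ u w hu hw
  have key : (4 : F) • linDefect₄ u e = (2 : F) • (w * u - (2⁻¹ * c) • u) := by
    simp only [linDefect₄, fun x : A => mul_comm x e, he.idem, hu, huu, hw, hwu, add_mul, mul_add,
      smul_mul_assoc, mul_smul_comm, add_zero]
    match_scalars <;> field_simp <;> ring
  rw [hD₄, smul_zero, eq_comm, smul_eq_zero, sub_eq_zero] at key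
  exact key.resolve_left h2

theorem zeroPart_mul_mul_eq (he : IsHalfAxis F e) (h2 : (2 : F) ≠ 0)
    (hD₄ : ∀ x y : A, linDefect₄ x y = 0) (hu : e * u = (2⁻¹ : F) • u) (hz : e * z = 0)
    (huu : u * u = c • e + w) (hw : e * w = 0) (hpu : (u * z) * u = b • e + w₁)
    (hw₁ : e * w₁ = 0) :
    w₁ = (2⁻¹ : F) • (w * z) := by
  have hp := he.fusionUZ u z hu hz
  have hwz := he.fusionZZ w z hw hz
  have key : linDefect₄ (u + e) z - linDefect₄ (u - e) z = (2 : F) • ((2 : F) • w₁ - w * z) := by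
    simp only [linDefect₄, fun x : A => mul_comm x e, mul_comm u (u * z), he.idem, hu, hz, huu,
      hw, hp, hpu, hw₁, hwz, add_mul, mul_add, sub_mul, mul_sub, smul_mul_assoc, mul_smul_comm,
      smul_zero, add_zero, mul_zero, zero_mul, smul_add, smul_sub]
    match_scalars <;> field_simp <;> ring
  rw [hD₄, hD₄, sub_zero, eq_comm, smul_eq_zero, sub_eq_zero] at key
  exact (eq_inv_smul_iff₀ h2).2 (key.resolve_left h2)

theorem mul_zeroPart_eq (he : IsHalfAxis F e) (h2 : (2 : F) ≠ 0)
    (hD₄ : ∀ x y : A, linDefect₄ x y = 0) (hD₅ : ∀ x y : A, linDefect₅ x y = 0)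
    (hu : e * u = (2⁻¹ : F) • u) (hz : e * z = 0) (huu : u * u = c • e + w) (hw : e * w = 0)
    (hwu : w * u = (2⁻¹ * c) • u) (hpu : (u * z) * u = b • e + (2⁻¹ : F) • (w * z)) :
    (u * z) * w = (2⁻¹ * b) • u ∧ (w * z) * u = (2⁻¹ * b) • u + (2⁻¹ * c) • (u * z) := by
  have hp := he.fusionUZ u z hu hz
  have hwz := he.fusionZZ w z hw hz
  have hwzu : e * ((w * z) * u) = (2⁻¹ : F) • ((w * z) * u) := by
    rw [mul_comm _ u]; exact he.fusionUZ u _ hu hwz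
  have hR : linDefect₄ u z =
      c • (u * z) + (4 : F) • ((u * z) * w) - b • u - (2 : F) • ((w * z) * u) := by
    simp only [linDefect₄, mul_comm w (u * z), hu, hz, huu, hp, hpu, hwu, add_mul,
      smul_mul_assoc, smul_zero, zero_mul, smul_add]
    match_scalars <;> field_simp <;> ring
  have hS : linDefect₅ (u + e) z - linDefect₅ (u - e) z =
      (8 : F) • ((u * z) * w) + c • (u * z) - (2 : F) • ((w * z) * u) - (3 * b) • u := by
    simp only [linDefect₅, fun x : A => mul_comm x e, mul_comm u (u * z), mul_comm w (u * z),
      mul_comm u (w * z), he.idem, hu, hz, huu, hw, hp, hpu, hwu, hwz, hwzu, add_mul, mul_add,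
      sub_mul, mul_sub, smul_mul_assoc, mul_smul_comm, smul_zero, add_zero, mul_zero, zero_mul,
      smul_add, smul_sub]
    match_scalars <;> field_simp <;> ring
  rw [hD₄] at hR
  rw [hD₅, hD₅, sub_zero] at hS
  have hpw : (u * z) * w = (2⁻¹ * b) • u := by
    linear_combination (norm := match_scalars <;> field_simp <;> ring) (2⁻¹ * 2⁻¹ : F) • (hR - hS)
  refine ⟨hpw, ?_⟩
  linear_combination (norm := match_scalars <;> field_simp <;> ring) (2⁻¹ : F) • hR + (2 : F) • hpw

end IsHalfAxis

theorem stmt14 {F : Type*} [Field F] {A : Type*} [NonUnitalNonAssocCommRing A]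
    [Module F A] [SMulCommClass F A A] [IsScalarTower F A A]
    (h2 : (2 : F) ≠ 0) (hF : 3 < Cardinal.mk F)
    (hid1 : ∀ x : A, (x * x) * (x * x) = ((x * x) * x) * x)
    (hid2 : ∀ x : A, ((x * x) * x) * (x * x) = x * (((x * x) * x) * x))
    (e : A) (he : IsHalfAxis F e)
    (u₁ z : A) (hu₁ : e * u₁ = (2⁻¹ : F) • u₁) (hz : e * z = 0) :
    (u₁ * u₁) * (u₁ * z) = u₁ * ((u₁ * u₁) * z) := by
  have hD₄ := linDefect₄_eq_zero h2 hF fun x => sub_eq_zero.2 (hid1 x)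
  have hD₅ := linDefect₅_eq_zero h2 hF fun x => sub_eq_zero.2 (hid2 x)
  obtain ⟨c, w, hw, huu⟩ := he.fusionUU u₁ u₁ hu₁ hu₁
  have hp := he.fusionUZ u₁ z hu₁ hz
  obtain ⟨b, w₁, hw₁, hpu⟩ := he.fusionUU (u₁ * z) u₁ hp hu₁
  rw [he.zeroPart_mul_mul_eq h2 hD₄ hu₁ hz huu hw hpu hw₁] at hpu
  obtain ⟨hpw, hwzu⟩ :=
    he.mul_zeroPart_eq h2 hD₄ hD₅ hu₁ hz huu hw (he.zeroPart_mul_eq h2 hD₄ hu₁ huu hw) hpu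
  rw [huu, add_mul, add_mul, smul_mul_assoc, smul_mul_assoc, hp, hz, smul_zero, zero_add,
    mul_comm w, hpw, mul_comm u₁ (w * z), hwzu]
  module
end
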